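/- arXiv:1707.07363 — 7 statements merged into one kernel-verified Lean document; each statement's English description precedes it below -/
import Mathlib

section
/- Every metrically removable set E ⊆ ℝ² is totally disconnected. -/
/-!
Suppose a connected `K ⊆ E` contains `x ≠ y`, and put `r = |x - y| / 4`. Since `E` has empty
interior, there are points `p₀, …, p₇ ∉ E` close to the vertices of the regular octagon of
radius `r` around `x`; removability joins consecutive ones by almost straight curves avoiding `E`.
Each curve stays so close to its starting point that its contribution to the winding number
around `x` is a principal argument of `(p_{i+1} - x) / (p_i - x)`, which is positive, while the
whole loop lies in a disc about `x` missing `y`, so it does not wind around `y`. But the winding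
number is locally constant off the loop, hence constant on `K`.
-/

open Set

/-- A set `E` in a metric space `X` is *metrically removable* if for every `ε > 0` and any two
points `a, b ∈ X` there is a curve connecting `a` to `b` that is disjoint from `E \ {a, b}`
and has length at most `dist a b + ε`. -/
def MetricallyRemovable {X : Type*} [MetricSpace X] (E : Set X) : Prop :=
  ∀ ε > 0, ∀ a b : X, ∃ γ : ℝ → X, ContinuousOn γ (Icc 0 1) ∧ γ 0 = a ∧ γ 1 = b ∧
    (∀ t ∈ Icc (0:ℝ) 1, γ t ∉ E \ {a, b}) ∧
    eVariationOn γ (Icc 0 1) ≤ ENNReal.ofReal (dist a b + ε)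

open Complex Topology
open scoped Real

namespace MetricallyRemovable

variable {X : Type*} [MetricSpace X] {E : Set X}

theorem exists_path (hE : MetricallyRemovable E) {ε : ℝ} (hε : 0 < ε) (a b : X) :
    ∃ γ : Path a b, (∀ t, γ t ∉ E \ {a, b}) ∧ ∀ t, dist (γ t) a ≤ dist a b + ε := by
  obtain ⟨γ, hγ, hγ0, hγ1, hγE, hvar⟩ := hE ε hε a b
  refine ⟨⟨⟨(Icc 0 1).domRestrict γ, hγ.domRestrict⟩, hγ0, hγ1⟩, fun t => hγE t t.2, fun t => ?_⟩
  have hedist := (eVariationOn.edist_le γ t.2 ⟨le_rfl, zero_le_one⟩).trans hvar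
  rw [hγ0] at hedist
  exact (edist_le_ofReal (by positivity)).1 hedist

theorem preimage_isometryEquiv {Y : Type*} [MetricSpace Y] {E : Set Y}
    (hE : MetricallyRemovable E) (e : X ≃ᵢ Y) : MetricallyRemovable (e ⁻¹' E) := by
  intro ε hε a b
  obtain ⟨γ, hγ, hγ0, hγ1, hγE, hvar⟩ := hE ε hε (e a) (e b)
  refine ⟨e.symm ∘ γ, e.symm.continuous.comp_continuousOn hγ, by simp [hγ0], by simp [hγ1],
    fun t ht ⟨hmem, hab⟩ => hγE t ht ⟨by simpa using hmem, ?_⟩, ?_⟩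
  · rintro (h | h)
    exacts [hab (Or.inl (by simp [h])), hab (Or.inr (by simp [mem_singleton_iff.1 h]))]
  · calc eVariationOn (e.symm ∘ γ) (Icc 0 1)
        ≤ 1 * eVariationOn γ (Icc 0 1) :=
          (e.symm.isometry.lipschitz.lipschitzOnWith (s := univ)).comp_eVariationOn_le
            (mapsTo_univ _ _)
      _ ≤ ENNReal.ofReal (dist a b + ε) := by rw [one_mul, ← e.dist_eq]; exact hvar

theorem interior_eq_empty {V : Type*} [NormedAddCommGroup V] [NormedSpace ℝ V] [Nontrivial V]
    {E : Set V} (hE : MetricallyRemovable E) : interior E = ∅ := by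
  refine eq_empty_of_forall_notMem fun x hx => ?_
  obtain ⟨ρ, hρ, hball⟩ := Metric.isOpen_iff.1 isOpen_interior x hx
  obtain ⟨v, hv⟩ := exists_norm_eq V (half_pos hρ).le
  obtain ⟨γ, hγE, -⟩ := hE.exists_path one_pos x (x + v)
  have hcont : Continuous fun t => dist (γ t) x := by fun_prop
  obtain ⟨t, ht : dist (γ t) x = ρ / 4⟩ : ρ / 4 ∈ range fun t => dist (γ t) x :=
    intermediate_value_univ 0 1 hcont ⟨by simp; positivity, by simp [hv]; linarith⟩
  refine hγE t ⟨interior_subset (hball (by simp [Metric.mem_ball, ht]; linarith)), ?_⟩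
  rintro (h | h)
  · rw [h, dist_self] at ht; linarith
  · rw [mem_singleton_iff.1 h, dist_eq_norm, add_sub_cancel_left, hv] at ht; linarith

end MetricallyRemovable

theorem IsPreconnected.apply_eq_of_eventually_eq {X Y : Type*} [TopologicalSpace X] {f : X → Y}
    {s : Set X} (hs : IsPreconnected s) (hf : ∀ x ∈ s, ∀ᶠ y in 𝓝 x, f y = f x) {x y : X}
    (hx : x ∈ s) (hy : y ∈ s) : f x = f y := by
  have := isPreconnected_iff_preconnectedSpace.1 hs
  have hloc : IsLocallyConstant (s.domRestrict f) := (IsLocallyConstant.iff_eventually_eq _).2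
    fun z => (continuous_subtype_val.tendsto z).eventually (hf z z.2)
  exact hloc.apply_eq_of_preconnectedSpace ⟨x, hx⟩ ⟨y, hy⟩

theorem mem_slitPlane_of_norm_sub_one_lt {z : ℂ} (hz : ‖z - 1‖ < 1) : z ∈ slitPlane := by
  simpa using mem_slitPlane_of_norm_lt_one hz

section LogLift

open unitInterval

theorem ContinuousMap.exists_exp_eq {f : C(I, ℂ)} (hf : ∀ t, f t ≠ 0) :
    ∃ L : C(I, ℂ), ∀ t, exp (L t) = f t := by
  let f' : C(I, {z : ℂ // z ≠ 0}) := ⟨fun t => ⟨f t, hf t⟩, by fun_prop⟩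
  obtain ⟨L, hL, -⟩ :=
    isCoveringMap_exp.exists_path_lifts f' (log (f 0)) (Subtype.ext (exp_log (hf 0)).symm)
  exact ⟨L, fun t => congrArg Subtype.val (congrFun hL t)⟩

theorem ContinuousMap.sub_eq_sub_of_exp_eq {L L' : C(I, ℂ)} (h : ∀ t, exp (L t) = exp (L' t)) :
    L 1 - L 0 = L' 1 - L' 0 := by
  have hconst := isCoveringMap_exp.const_of_comp (g := fun t => L t - L' t) (by fun_prop)
    (fun t t' => Subtype.ext (by simp [exp_sub, h])) 1 0
  linear_combination hconst

open Classical in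
/-- The change of a continuous logarithm of `γ - w` along `γ`; it is `0` (a junk value) when `γ`
passes through `w`. -/
noncomputable def Path.logIncrement {a b : ℂ} (γ : Path a b) (w : ℂ) : ℂ :=
  if h : ∃ L : C(I, ℂ), ∀ t, exp (L t) = γ t - w then h.choose 1 - h.choose 0 else 0

namespace Path

variable {a b : ℂ} (γ : Path a b)

theorem logIncrement_eq {w : ℂ} {L : C(I, ℂ)} (hL : ∀ t, exp (L t) = γ t - w) :
    γ.logIncrement w = L 1 - L 0 := by
  have h : ∃ L : C(I, ℂ), ∀ t, exp (L t) = γ t - w := ⟨L, hL⟩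
  rw [logIncrement, dif_pos h]
  exact ContinuousMap.sub_eq_sub_of_exp_eq fun t => (h.choose_spec t).trans (hL t).symm

theorem logIncrement_eq_log_sub_log {c w : ℂ} (hγ : ∀ t, dist (γ t) c < dist c w) :
    γ.logIncrement w = log ((b - w) / (c - w)) - log ((a - w) / (c - w)) := by
  have hcw : c - w ≠ 0 := by
    rw [sub_ne_zero, ← dist_pos]; exact dist_nonneg.trans_lt (hγ 0)
  have hslit : ∀ t, (γ t - w) / (c - w) ∈ slitPlane := fun t => by
    refine mem_slitPlane_of_norm_sub_one_lt ?_
    rw [div_sub_one hcw, sub_sub_sub_cancel_right, norm_div, div_lt_one (norm_pos_iff.2 hcw),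
      ← dist_eq_norm, ← dist_eq_norm]
    exact hγ t
  let L : C(I, ℂ) := ⟨fun t => log (c - w) + log ((γ t - w) / (c - w)),
    continuous_const.add ((by fun_prop : Continuous fun t => (γ t - w) / (c - w)).clog hslit)⟩
  have hL : ∀ t, exp (L t) = γ t - w := fun t => by
    simp only [L, ContinuousMap.coe_mk, exp_add, exp_log hcw,
      exp_log (slitPlane_ne_zero (hslit t)), mul_div_cancel₀ _ hcw]
  rw [γ.logIncrement_eq hL]
  simp only [L, ContinuousMap.coe_mk, Path.source, Path.target]
  ring

theorem logIncrement_eq_add_log_sub_log {w w' : ℂ} (hγ : ∀ t, dist w' w < dist (γ t) w) :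
    γ.logIncrement w' =
      γ.logIncrement w + log ((b - w') / (b - w)) - log ((a - w') / (a - w)) := by
  have hw : ∀ t, γ t - w ≠ 0 := fun t => by
    rw [sub_ne_zero, ← dist_pos]; exact dist_nonneg.trans_lt (hγ t)
  have hslit : ∀ t, (γ t - w') / (γ t - w) ∈ slitPlane := fun t => by
    refine mem_slitPlane_of_norm_sub_one_lt ?_
    rw [div_sub_one (hw t), sub_sub_sub_cancel_left, norm_div, div_lt_one (norm_pos_iff.2 (hw t)),
      ← dist_eq_norm, ← dist_eq_norm, dist_comm]
    exact hγ t
  obtain ⟨L, hL⟩ := ContinuousMap.exists_exp_eq (f := ⟨fun t => γ t - w, by fun_prop⟩) hw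
  let L' : C(I, ℂ) := ⟨fun t => L t + log ((γ t - w') / (γ t - w)),
    L.continuous.add ((by fun_prop : Continuous fun t => (γ t - w') / (γ t - w)).clog hslit)⟩
  have hL' : ∀ t, exp (L' t) = γ t - w' := fun t => by
    simp only [L', ContinuousMap.coe_mk, exp_add, exp_log (slitPlane_ne_zero (hslit t))]
    rw [hL t]
    exact mul_div_cancel₀ _ (hw t)
  rw [γ.logIncrement_eq hL', γ.logIncrement_eq hL]
  simp only [L', ContinuousMap.coe_mk, Path.source, Path.target]
  ring

end Path

end LogLift

/-- When `p n = p 0`, the paths `γ 0, …, γ (n - 1)` form a loop and this is `2πi` times its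
winding number around `w`. -/
noncomputable def chainLogIncrement {p : ℕ → ℂ} (γ : ∀ i, Path (p i) (p (i + 1))) (n : ℕ)
    (w : ℂ) : ℂ :=
  ∑ i ∈ Finset.range n, (γ i).logIncrement w

section Chain

variable {p : ℕ → ℂ} {γ : ∀ i, Path (p i) (p (i + 1))} {n : ℕ}

theorem chainLogIncrement_eventually_eq (hp : p n = p 0) {w : ℂ}
    (hw : ∀ i < n, ∀ t, γ i t ≠ w) :
    ∀ᶠ w' in 𝓝 w, chainLogIncrement γ n w' = chainLogIncrement γ n w := by
  have hF : IsCompact (⋃ i ∈ Finset.range n, range (γ i)) :=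
    (Finset.range n).isCompact_biUnion fun i _ => isCompact_range (γ i).continuous
  obtain ⟨δ, hδ, hball⟩ := Metric.isOpen_iff.1 hF.isClosed.isOpen_compl w (by
    simp only [mem_compl_iff, mem_iUnion, mem_range, Finset.mem_range, not_exists]
    exact fun i hi t => hw i hi t)
  filter_upwards [Metric.ball_mem_nhds w hδ] with w' hw'
  have hfar : ∀ i < n, ∀ t, dist w' w < dist (γ i t) w := fun i hi t => by
    refine hw'.trans_le (not_lt.1 fun h => hball h ?_)
    simp only [mem_iUnion, mem_range, Finset.mem_range]
    exact ⟨i, hi, t, rfl⟩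
  let g : ℂ → ℂ := fun z => log ((z - w') / (z - w))
  calc chainLogIncrement γ n w'
      = ∑ i ∈ Finset.range n, ((γ i).logIncrement w + (g (p (i + 1)) - g (p i))) :=
        Finset.sum_congr rfl fun i hi => by
          rw [(γ i).logIncrement_eq_add_log_sub_log (hfar i (Finset.mem_range.1 hi))]; ring
    _ = chainLogIncrement γ n w := by
        rw [Finset.sum_add_distrib, Finset.sum_range_sub (fun i => g (p i)), hp, sub_self,
          add_zero, chainLogIncrement]

theorem chainLogIncrement_eq_zero (hp : p n = p 0) {c w : ℂ}
    (hγ : ∀ i < n, ∀ t, dist (γ i t) c < dist c w) : chainLogIncrement γ n w = 0 := by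
  let g : ℂ → ℂ := fun z => log ((z - w) / (c - w))
  calc chainLogIncrement γ n w = ∑ i ∈ Finset.range n, (g (p (i + 1)) - g (p i)) :=
        Finset.sum_congr rfl fun i hi =>
          (γ i).logIncrement_eq_log_sub_log (hγ i (Finset.mem_range.1 hi))
    _ = 0 := by rw [Finset.sum_range_sub (fun i => g (p i)), hp, sub_self]

theorem im_chainLogIncrement_pos (hn : 0 < n) {w : ℂ}
    (hγ : ∀ i < n, ∀ t, dist (γ i t) (p i) < dist (p i) w)
    (hturn : ∀ i < n, 0 < ((p (i + 1) - w) / (p i - w)).im) :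
    0 < (chainLogIncrement γ n w).im := by
  rw [chainLogIncrement, im_sum]
  refine Finset.sum_pos (fun i hi => ?_) (Finset.nonempty_range_iff.2 hn.ne')
  have hi := Finset.mem_range.1 hi
  have hpw : p i - w ≠ 0 := by
    rw [sub_ne_zero, ← dist_pos]; exact dist_nonneg.trans_lt (hγ i hi 0)
  rw [(γ i).logIncrement_eq_log_sub_log (hγ i hi), div_self hpw, log_one, sub_zero, log_im]
  exact (arg_nonneg_iff.2 (hturn i hi).le).lt_of_ne
    fun h => (hturn i hi).ne' (arg_eq_zero_iff.1 h.symm).2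

theorem chainLogIncrement_eq_of_isPreconnected (hp : p n = p 0) {K : Set ℂ}
    (hK : IsPreconnected K) (hKγ : ∀ w ∈ K, ∀ i < n, ∀ t, γ i t ≠ w) {x y : ℂ} (hx : x ∈ K)
    (hy : y ∈ K) : chainLogIncrement γ n x = chainLogIncrement γ n y :=
  hK.apply_eq_of_eventually_eq (fun w hw => chainLogIncrement_eventually_eq hp (hKγ w hw)) hx hy

end Chain

noncomputable def octagonVertex (x : ℂ) (r : ℝ) (i : ℕ) : ℂ := x + r * exp (I * ↑(π / 4)) ^ i

section Octagon

variable {x : ℂ} {r : ℝ}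

theorem exp_I_mul_pi_div_four_pow_eight : exp (I * ↑(π / 4)) ^ 8 = 1 := by
  rw [← exp_nat_mul, ← exp_two_pi_mul_I]
  push_cast
  ring_nf

theorem norm_exp_I_mul_pi_div_four_sub_one_le : ‖exp (I * ↑(π / 4)) - 1‖ ≤ 4 / 5 := by
  refine Real.norm_exp_I_mul_ofReal_sub_one_le.trans ?_
  rw [Real.norm_of_nonneg (by positivity)]
  linarith [Real.pi_lt_d2]

theorem half_lt_im_exp_I_mul_pi_div_four : 1 / 2 < (exp (I * ↑(π / 4))).im := by
  rw [mul_comm, exp_ofReal_mul_I_im, Real.sin_pi_div_four]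
  linarith [Real.one_lt_sqrt_two]

theorem octagonVertex_mod_eight (i : ℕ) : octagonVertex x r (i % 8) = octagonVertex x r i := by
  rw [octagonVertex, octagonVertex, ← pow_eq_pow_mod i exp_I_mul_pi_div_four_pow_eight]

theorem dist_octagonVertex_center (hr : 0 ≤ r) (i : ℕ) : dist (octagonVertex x r i) x = r := by
  rw [octagonVertex, dist_eq_norm, add_sub_cancel_left, norm_mul, norm_pow, norm_exp_I_mul_ofReal,
    one_pow, mul_one, norm_real, Real.norm_of_nonneg hr]

theorem dist_octagonVertex_succ_le (hr : 0 ≤ r) (i : ℕ) :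
    dist (octagonVertex x r i) (octagonVertex x r (i + 1)) ≤ 4 / 5 * r := by
  rw [octagonVertex, octagonVertex, dist_eq_norm, add_sub_add_left_eq_sub, pow_succ, ← mul_sub,
    ← mul_one_sub, norm_mul, norm_mul, norm_pow, norm_exp_I_mul_ofReal, one_pow, one_mul,
    norm_real, Real.norm_of_nonneg hr, norm_sub_rev, mul_comm]
  exact mul_le_mul_of_nonneg_right norm_exp_I_mul_pi_div_four_sub_one_le hr

theorem im_div_pos_of_dist_octagonVertex_lt {η : ℝ} (hη : 5 * η ≤ r) {i : ℕ} {u v : ℂ}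
    (hu : dist u (octagonVertex x r (i + 1)) < η) (hv : dist v (octagonVertex x r i) < η) :
    0 < ((u - x) / (v - x)).im := by
  set ω := exp (I * ↑(π / 4))
  have hvx : r - η < ‖v - x‖ := by
    have := dist_triangle_left (octagonVertex x r i) x v
    rw [dist_octagonVertex_center (by linarith [dist_nonneg.trans_lt hu])] at this
    rw [← dist_eq_norm]; linarith
  have hvx0 : v - x ≠ 0 := norm_pos_iff.1 (by linarith [dist_nonneg.trans_lt hu])
  have hnum : ‖u - x - ω * (v - x)‖ < 2 * η := by
    have hsplit : u - x - ω * (v - x) =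
        (u - octagonVertex x r (i + 1)) - ω * (v - octagonVertex x r i) := by
      simp only [octagonVertex, pow_succ]; ring
    calc ‖u - x - ω * (v - x)‖
        ≤ ‖u - octagonVertex x r (i + 1)‖ + ‖ω * (v - octagonVertex x r i)‖ := by
          rw [hsplit]; exact norm_sub_le _ _
      _ < η + η := by
          rw [norm_mul, norm_exp_I_mul_ofReal, one_mul, ← dist_eq_norm, ← dist_eq_norm]
          exact add_lt_add hu hv
      _ = 2 * η := by ring
  have hclose : ‖(u - x) / (v - x) - ω‖ < 1 / 2 := by
    rw [div_sub' hvx0, norm_div, div_lt_iff₀ (norm_pos_iff.2 hvx0), mul_comm (v - x)]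
    linarith
  have him := (abs_le.1 ((abs_im_le_norm _).trans hclose.le)).1
  rw [sub_im] at him
  linarith [half_lt_im_exp_I_mul_pi_div_four]

theorem exists_notMem_dist_octagonVertex_lt {E : Set ℂ} (hE : Dense Eᶜ) (x : ℂ) (r : ℝ)
    {η : ℝ} (hη : 0 < η) :
    ∃ p : ℕ → ℂ, (∀ i, p i ∉ E) ∧ p 8 = p 0 ∧ ∀ i, dist (p i) (octagonVertex x r i) < η := by
  choose q hqE hq using fun i => hE.exists_dist_lt (octagonVertex x r i) hη
  refine ⟨fun i => q (i % 8), fun i => hqE _, rfl, fun i => ?_⟩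
  rw [dist_comm, ← octagonVertex_mod_eight]
  exact hq _

end Octagon

theorem MetricallyRemovable.exists_closed_chain_separating {E : Set ℂ}
    (hE : MetricallyRemovable E) {x y : ℂ} (hxy : x ≠ y) :
    ∃ (p : ℕ → ℂ) (γ : ∀ i, Path (p i) (p (i + 1))), p 8 = p 0 ∧ (∀ i t, γ i t ∉ E) ∧
      chainLogIncrement γ 8 x ≠ chainLogIncrement γ 8 y := by
  set r := dist x y / 4 with hr
  have hr0 : 0 < r := by have := dist_pos.2 hxy; positivity
  set η := r / 40 with hη
  have hη0 : 0 < η := by positivity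
  obtain ⟨p, hpE, hp8, hp⟩ := exists_notMem_dist_octagonVertex_lt
    (interior_eq_empty_iff_dense_compl.1 hE.interior_eq_empty) x r hη0
  choose γ hγE hγ using fun i => hE.exists_path hη0 (p i) (p (i + 1))
  have hpx : ∀ i, r - η < dist (p i) x ∧ dist (p i) x < r + η := fun i => by
    have h₁ := dist_triangle (p i) (octagonVertex x r i) x
    have h₂ := dist_triangle_left (octagonVertex x r i) x (p i)
    rw [dist_octagonVertex_center hr0.le] at h₁ h₂
    constructor <;> linarith [hp i]
  have hγp : ∀ i t, dist (γ i t) (p i) < 4 / 5 * r + 3 * η := fun i t => by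
    have := dist_triangle4 (p i) (octagonVertex x r i) (octagonVertex x r (i + 1)) (p (i + 1))
    rw [dist_comm (octagonVertex x r (i + 1))] at this
    linarith [hγ i t, hp i, hp (i + 1), dist_octagonVertex_succ_le (x := x) hr0.le i]
  refine ⟨p, γ, hp8, fun i t hmem => hγE i t ⟨hmem, ?_⟩, fun hxy' => ?_⟩
  · rintro (h | h)
    exacts [hpE i (h ▸ hmem), hpE (i + 1) (mem_singleton_iff.1 h ▸ hmem)]
  have hxpos : 0 < (chainLogIncrement γ 8 x).im :=
    im_chainLogIncrement_pos (by norm_num) (fun i _ t => by linarith [hγp i t, (hpx i).1])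
      (fun i _ => im_div_pos_of_dist_octagonVertex_lt (by linarith) (hp (i + 1)) (hp i))
  have hy0 : chainLogIncrement γ 8 y = 0 :=
    chainLogIncrement_eq_zero hp8 (c := x) fun i _ t => by
      linarith [dist_triangle (γ i t) (p i) x, hγp i t, (hpx i).2]
  rw [hxy', hy0, zero_im] at hxpos
  exact hxpos.false

theorem MetricallyRemovable.isTotallyDisconnected {E : Set ℂ} (hE : MetricallyRemovable E) :
    IsTotallyDisconnected E := by
  intro K hKE hK x hx y hy
  by_contra hxy
  obtain ⟨p, γ, hp8, hγE, hne⟩ := hE.exists_closed_chain_separating hxy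
  exact hne (chainLogIncrement_eq_of_isPreconnected hp8 hK
    (fun w hw i _ t h => hγE i t (h ▸ hKE hw)) hx hy)

/-- Every metrically removable set in `ℝ²` is totally disconnected. -/
theorem isTotallyDisconnected_of_metricallyRemovable
    (E : Set (EuclideanSpace ℝ (Fin 2))) (hE : MetricallyRemovable E) :
    IsTotallyDisconnected E := by
  let e : ℂ ≃ᵢ EuclideanSpace ℝ (Fin 2) := orthonormalBasisOneI.repr.toIsometryEquiv
  rw [← e.surjective.image_preimage E]
  exact e.isometry.isEmbedding.isTotallyDisconnected_image.2
    (hE.preimage_isometryEquiv e).isTotallyDisconnected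
end

section
/- For every n ≥ 2 there exists a compact set E ⊆ ℝⁿ with 𝓗ⁿ(E) > 0 (positive Lebesgue measure) that is metrically removable. -/
open Set MeasureTheory

/-!
Fix a countable dense set `D`. Since `n ≥ 2`, every segment has measure zero, so the union of
all segments between points of `D` is null and, by outer regularity, lies in an open set `U` of
measure less than that of the closed unit ball. Then `E = closedBall 0 1 \ U` is compact of
positive measure. To join `a` to `b` while avoiding `E`, run along a polygonal line through
points `p k ∈ D` converging to `a` (backwards, from `a` to `p 0`), then along the segment from
`p 0` to the first vertex `q 0` of a similar polygonal line for `b`, then along that line into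
`b`. If `dist (p k) a ≤ δ / (k + 2) ^ 2`, the polygonal line, traversed so that `p k` is reached
at time `1 / (k + 1)`, is `2δ`-Lipschitz, hence has length at most `2δ`.
-/

open Filter Topology Metric AffineMap
open scoped NNReal ENNReal

section Lipschitz

theorem LipschitzOnWith.insert_of_tendsto {X Y : Type*} [PseudoEMetricSpace X]
    [PseudoEMetricSpace Y] {f : X → Y} {K : ℝ≥0} {s : Set X} {x : X} {u : ℕ → X}
    (hf : LipschitzOnWith K f s) (hus : ∀ k, u k ∈ s) (hu : Tendsto u atTop (𝓝 x))
    (hfu : Tendsto (f ∘ u) atTop (𝓝 (f x))) : LipschitzOnWith K f (insert x s) := by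
  have hx : ∀ y ∈ s, edist (f x) (f y) ≤ K * edist x y := fun y hy =>
    le_of_tendsto_of_tendsto' (hfu.edist tendsto_const_nhds)
      (ENNReal.Tendsto.const_mul (hu.edist tendsto_const_nhds) (Or.inr ENNReal.coe_ne_top))
      fun k => hf (hus k) hy
  rintro y (rfl | hy) z (rfl | hz)
  · simp
  · exact hx z hz
  · rw [edist_comm, edist_comm y]
    exact hx y hy
  · exact hf hy hz

theorem LipschitzOnWith.Icc_union_Icc {Y : Type*} [PseudoMetricSpace Y] {f : ℝ → Y} {K : ℝ≥0}
    {a b c : ℝ} (hab : LipschitzOnWith K f (Icc a b)) (hbc : LipschitzOnWith K f (Icc b c)) :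
    LipschitzOnWith K f (Icc a c) := by
  have hle : ∀ x ∈ Icc a c, ∀ y ∈ Icc a c, x ≤ y → dist (f x) (f y) ≤ K * dist x y := by
    intro x hx y hy hxy
    by_cases hyb : y ≤ b
    · exact hab.dist_le_mul x ⟨hx.1, hxy.trans hyb⟩ y ⟨hy.1, hyb⟩
    by_cases hbx : b ≤ x
    · exact hbc.dist_le_mul x ⟨hbx, hx.2⟩ y ⟨hbx.trans hxy, hy.2⟩
    push Not at hyb hbx
    calc dist (f x) (f y) ≤ dist (f x) (f b) + dist (f b) (f y) := dist_triangle _ _ _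
      _ ≤ K * dist x b + K * dist b y :=
          add_le_add (hab.dist_le_mul x ⟨hx.1, hbx.le⟩ b ⟨hx.1.trans hbx.le, le_rfl⟩)
            (hbc.dist_le_mul b ⟨le_rfl, hyb.le.trans hy.2⟩ y ⟨hyb.le, hy.2⟩)
      _ = K * dist x y := by
          have hdist : ∀ {u v : ℝ}, u ≤ v → dist u v = v - u := fun h => by
            rw [dist_comm, Real.dist_eq, abs_of_nonneg (sub_nonneg.2 h)]
          rw [hdist hbx.le, hdist hyb.le, hdist hxy]
          ring
  refine LipschitzOnWith.of_dist_le_mul fun x hx y hy => ?_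
  rcases le_total x y with hxy | hyx
  · exact hle x hx y hy hxy
  · rw [dist_comm, dist_comm x]
    exact hle y hy x hx hyx

theorem LipschitzOnWith.eVariationOn_Icc_le {X : Type*} [PseudoEMetricSpace X] {f : ℝ → X}
    {K : ℝ≥0} {a b : ℝ} (hf : LipschitzOnWith K f (Icc a b)) :
    eVariationOn f (Icc a b) ≤ K * ENNReal.ofReal (b - a) := by
  rcases le_or_gt a b with hab | hba
  · calc eVariationOn f (Icc a b) = eVariationOn (f ∘ id) (Icc a b) := rfl
      _ ≤ K * eVariationOn id (Icc a b) := hf.comp_eVariationOn_le (mapsTo_id _)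
      _ ≤ K * ENNReal.ofReal (b - a) := by
        gcongr
        simpa only [inter_self, id_eq] using
          (monotoneOn_id.eVariationOn_eq (left_mem_Icc.2 hab) (right_mem_Icc.2 hab)).le
  · rw [Icc_eq_empty_of_lt hba, eVariationOn.subsingleton f subsingleton_empty]
    exact zero_le

theorem LipschitzOnWith.comp_one_sub {X : Type*} [PseudoEMetricSpace X] {f : ℝ → X}
    {K : ℝ≥0} (hf : LipschitzOnWith K f (Icc 0 1)) :
    LipschitzOnWith K (fun t => f (1 - t)) (Icc 0 1) := by
  have hmaps : MapsTo (fun t : ℝ => 1 - t) (Icc 0 1) (Icc 0 1) :=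
    fun t ht => ⟨by linarith [ht.2], by linarith [ht.1]⟩
  have h := hf.comp (IsometryEquiv.subLeft (1 : ℝ)).isometry.lipschitz.lipschitzOnWith hmaps
  rwa [mul_one] at h

end Lipschitz

section Concatenation

variable {X : Type*}

noncomputable def curveTrans (α β : ℝ → X) (t : ℝ) : X :=
  if t ≤ 1 / 2 then α (2 * t) else β (2 * t - 1)

variable {α β : ℝ → X}

theorem curveTrans_zero : curveTrans α β 0 = α 0 := by
  simp [curveTrans]

theorem curveTrans_one : curveTrans α β 1 = β 1 := by
  norm_num [curveTrans]

theorem eqOn_curveTrans_left :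
    EqOn (curveTrans α β) (α ∘ fun t => 2 * t) (Icc 0 (1 / 2)) :=
  fun _ ht => if_pos ht.2

theorem eqOn_curveTrans_right (h : α 1 = β 0) :
    EqOn (curveTrans α β) (β ∘ fun t => 2 * t - 1) (Icc (1 / 2) 1) := by
  intro t ht
  rcases ht.1.eq_or_lt with rfl | hlt
  · norm_num [curveTrans, h]
  · rw [curveTrans, if_neg (not_le.2 hlt)]
    rfl

theorem mapsTo_curveTrans {s : Set X} (hα : MapsTo α (Icc 0 1) s) (hβ : MapsTo β (Icc 0 1) s) :
    MapsTo (curveTrans α β) (Icc 0 1) s := by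
  intro t ht
  unfold curveTrans
  split_ifs with h
  · exact hα ⟨by linarith [ht.1], by linarith⟩
  · exact hβ ⟨by linarith, by linarith [ht.2]⟩

theorem continuousOn_curveTrans [TopologicalSpace X] (hα : ContinuousOn α (Icc 0 1))
    (hβ : ContinuousOn β (Icc 0 1)) (h : α 1 = β 0) : ContinuousOn (curveTrans α β) (Icc 0 1) := by
  have hl : ContinuousOn (curveTrans α β) (Icc 0 (1 / 2)) :=
    (hα.comp (by fun_prop : Continuous fun t : ℝ => 2 * t).continuousOn
      fun t ht => ⟨by linarith [ht.1], by linarith [ht.2]⟩).congr eqOn_curveTrans_left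
  have hr : ContinuousOn (curveTrans α β) (Icc (1 / 2) 1) :=
    (hβ.comp (by fun_prop : Continuous fun t : ℝ => 2 * t - 1).continuousOn
      fun t ht => ⟨by linarith [ht.1], by linarith [ht.2]⟩).congr (eqOn_curveTrans_right h)
  rw [← Icc_union_Icc_eq_Icc (by norm_num : (0 : ℝ) ≤ 1 / 2) (by norm_num : (1 / 2 : ℝ) ≤ 1)]
  exact hl.union_of_isClosed hr isClosed_Icc isClosed_Icc

theorem eVariationOn_curveTrans [PseudoEMetricSpace X] (h : α 1 = β 0) :
    eVariationOn (curveTrans α β) (Icc 0 1) =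
      eVariationOn α (Icc 0 1) + eVariationOn β (Icc 0 1) := by
  have hsplit := eVariationOn.Icc_add_Icc (curveTrans α β) (s := univ)
    (by norm_num : (0 : ℝ) ≤ 1 / 2) (by norm_num : (1 / 2 : ℝ) ≤ 1) (mem_univ _)
  simp only [univ_inter] at hsplit
  have himl : (fun t : ℝ => 2 * t) '' Icc 0 (1 / 2) = Icc 0 1 := by
    rw [image_mul_left_Icc' two_pos]; norm_num
  have himr : (fun t : ℝ => 2 * t - 1) '' Icc (1 / 2) 1 = Icc 0 1 := by
    simp only [sub_eq_add_neg]; rw [image_affine_Icc' two_pos]; norm_num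
  rw [← hsplit, eVariationOn.eq_of_eqOn eqOn_curveTrans_left,
    eVariationOn.eq_of_eqOn (eqOn_curveTrans_right h),
    eVariationOn.comp_eq_of_monotoneOn _ _ (fun _ _ _ _ hst => by linarith),
    eVariationOn.comp_eq_of_monotoneOn _ _ (fun _ _ _ _ hst => by linarith), himl, himr]

end Concatenation

section Polygon

variable {V : Type*} [NormedAddCommGroup V] [NormedSpace ℝ V]

noncomputable def polygonalCurve (p : ℕ → V) (x : ℝ) : V :=
  lineMap (p ⌊x⌋₊) (p (⌊x⌋₊ + 1)) (x - ⌊x⌋₊)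

theorem polygonalCurve_eq_lineMap (p : ℕ → V) {k : ℕ} {x : ℝ} (hx : x ∈ Icc (k : ℝ) (k + 1)) :
    polygonalCurve p x = lineMap (p k) (p (k + 1)) (x - k) := by
  rcases hx.2.eq_or_lt with rfl | hlt
  · have hfloor : ⌊(k : ℝ) + 1⌋₊ = k + 1 := by exact_mod_cast Nat.floor_natCast (k + 1)
    simp [polygonalCurve, hfloor]
  · have hfloor : ⌊x⌋₊ = k := (Nat.floor_eq_iff ((Nat.cast_nonneg k).trans hx.1)).2 ⟨hx.1, hlt⟩
    rw [polygonalCurve, hfloor]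

theorem polygonalCurve_natCast (p : ℕ → V) (k : ℕ) : polygonalCurve p k = p k := by
  simp [polygonalCurve]

theorem polygonalCurve_mem_segment (p : ℕ → V) {x : ℝ} (hx : 0 ≤ x) :
    polygonalCurve p x ∈ segment ℝ (p ⌊x⌋₊) (p (⌊x⌋₊ + 1)) := by
  rw [segment_eq_image_lineMap]
  exact ⟨x - ⌊x⌋₊, ⟨sub_nonneg.2 (Nat.floor_le hx), by linarith [Nat.lt_floor_add_one x]⟩, rfl⟩

noncomputable def approachCurve (a : V) (p : ℕ → V) (t : ℝ) : V :=
  if t ≤ 0 then a else polygonalCurve p (t⁻¹ - 1)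

variable {a : V} {p : ℕ → V}

theorem approachCurve_zero : approachCurve a p 0 = a := if_pos le_rfl

theorem approachCurve_inv_succ (k : ℕ) : approachCurve a p ((k : ℝ) + 1)⁻¹ = p k := by
  rw [approachCurve, if_neg (not_le.2 (by positivity)), inv_inv, add_sub_cancel_right,
    polygonalCurve_natCast]

theorem approachCurve_one : approachCurve a p 1 = p 0 := by
  simpa using approachCurve_inv_succ (a := a) (p := p) 0

theorem approachCurve_mem_segment {t : ℝ} (ht : t ∈ Ioc 0 1) :
    ∃ k, approachCurve a p t ∈ segment ℝ (p k) (p (k + 1)) := by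
  rw [approachCurve, if_neg (not_le.2 ht.1)]
  exact ⟨_, polygonalCurve_mem_segment p (sub_nonneg.2 (one_le_inv₀ ht.1 |>.2 ht.2))⟩

theorem lipschitzOnWith_approachCurve_piece {L : ℝ≥0} (k : ℕ)
    (hk : dist (p k) (p (k + 1)) * ((k : ℝ) + 2) ^ 2 ≤ L) :
    LipschitzOnWith L (approachCurve a p) (Icc ((k : ℝ) + 2)⁻¹ ((k : ℝ) + 1)⁻¹) := by
  have hpiece : ∀ t ∈ Icc ((k : ℝ) + 2)⁻¹ ((k : ℝ) + 1)⁻¹,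
      0 < t ∧ t⁻¹ ≤ k + 2 ∧
        approachCurve a p t = lineMap (p k) (p (k + 1)) (t⁻¹ - 1 - k) := by
    intro t ht
    have ht0 : 0 < t := lt_of_lt_of_le (inv_pos.2 (by positivity)) ht.1
    have h₁ : (k : ℝ) + 1 ≤ t⁻¹ := (le_inv_comm₀ ht0 (by positivity)).1 ht.2
    have h₂ : t⁻¹ ≤ k + 2 := (inv_le_comm₀ (by positivity) ht0).1 ht.1
    refine ⟨ht0, h₂, ?_⟩
    rw [approachCurve, if_neg (not_le.2 ht0),
      polygonalCurve_eq_lineMap p ⟨le_sub_iff_add_le.2 h₁, sub_le_iff_le_add.2 (by linarith)⟩]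
  refine LipschitzOnWith.of_dist_le_mul fun s hs t ht => ?_
  obtain ⟨hs0, hs2, hs⟩ := hpiece s hs
  obtain ⟨ht0, ht2, ht⟩ := hpiece t ht
  have hinv : |s⁻¹ - t⁻¹| ≤ ((k : ℝ) + 2) ^ 2 * dist s t := by
    rw [inv_sub_inv hs0.ne' ht0.ne', abs_div, abs_of_pos (mul_pos hs0 ht0), div_eq_mul_inv,
      mul_inv, abs_sub_comm, ← Real.dist_eq, mul_comm, sq]
    gcongr
  calc dist (approachCurve a p s) (approachCurve a p t)
      = |s⁻¹ - t⁻¹| * dist (p k) (p (k + 1)) := by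
        rw [hs, ht, dist_lineMap_lineMap, Real.dist_eq]; ring_nf
    _ ≤ ((k : ℝ) + 2) ^ 2 * dist s t * dist (p k) (p (k + 1)) := by gcongr
    _ ≤ L * dist s t := by nlinarith [dist_nonneg (x := s) (y := t)]

theorem lipschitzOnWith_approachCurve {L : ℝ≥0} (ha : Tendsto p atTop (𝓝 a))
    (hp : ∀ k, dist (p k) (p (k + 1)) * ((k : ℝ) + 2) ^ 2 ≤ L) :
    LipschitzOnWith L (approachCurve a p) (Icc 0 1) := by
  have hIcc : ∀ m : ℕ, LipschitzOnWith L (approachCurve a p) (Icc ((m : ℝ) + 1)⁻¹ 1) := by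
    intro m
    induction m with
    | zero =>
      refine LipschitzOnWith.of_dist_le_mul fun s hs t ht => ?_
      norm_num at hs ht
      simp [hs, ht]
    | succ m ih =>
      have h := (lipschitzOnWith_approachCurve_piece m (hp m)).Icc_union_Icc ih
      rwa [show ((m : ℝ) + 2) = ((m + 1 : ℕ) : ℝ) + 1 by push_cast; ring] at h
  have hIoc : LipschitzOnWith L (approachCurve a p) (Ioc 0 1) := by
    refine LipschitzOnWith.of_dist_le_mul fun s hs t ht => ?_
    obtain ⟨m, hm⟩ := exists_nat_one_div_lt (lt_min hs.1 ht.1)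
    rw [one_div] at hm
    exact (hIcc m).dist_le_mul s ⟨(hm.trans_le (min_le_left _ _)).le, hs.2⟩
      t ⟨(hm.trans_le (min_le_right _ _)).le, ht.2⟩
  rw [← Ioc_union_left zero_le_one, union_singleton]
  refine hIoc.insert_of_tendsto (u := fun k => ((k : ℝ) + 1)⁻¹) (fun k => ⟨by positivity, ?_⟩)
    ?_ ?_
  · exact inv_le_one_of_one_le₀ (by linarith [k.cast_nonneg (α := ℝ)])
  · simpa [one_div] using tendsto_one_div_add_atTop_nhds_zero_nat (𝕜 := ℝ)
  · simpa only [Function.comp_def, approachCurve_inv_succ, approachCurve_zero] using ha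

end Polygon

section Removable

variable {V : Type*} [NormedAddCommGroup V] [NormedSpace ℝ V] {D : Set V}

def segmentUnion (D : Set V) : Set V :=
  ⋃ x ∈ D, ⋃ y ∈ D, segment ℝ x y

theorem segment_subset_segmentUnion {x y : V} (hx : x ∈ D) (hy : y ∈ D) :
    segment ℝ x y ⊆ segmentUnion D :=
  subset_biUnion_of_mem (u := fun x => ⋃ y ∈ D, segment ℝ x y) hx |>.trans' <|
    subset_biUnion_of_mem (u := fun y => segment ℝ x y) hy

theorem MetricallyRemovable.mono {X : Type*} [MetricSpace X] {E F : Set X}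
    (hF : MetricallyRemovable F) (hEF : E ⊆ F) : MetricallyRemovable E := by
  intro ε hε a b
  obtain ⟨γ, hγc, hγ0, hγ1, hγF, hγv⟩ := hF ε hε a b
  exact ⟨γ, hγc, hγ0, hγ1, fun t ht hE => hγF t ht (sdiff_subset_sdiff_left hEF hE), hγv⟩

theorem Dense.exists_lipschitz_curve_from (hD : Dense D) (a : V) {δ : ℝ≥0} (hδ : 0 < δ) :
    ∃ α : ℝ → V, α 0 = a ∧ α 1 ∈ D ∧ dist (α 1) a ≤ δ ∧
      LipschitzOnWith (2 * δ) α (Icc 0 1) ∧ MapsTo α (Icc 0 1) (insert a (segmentUnion D)) := by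
  choose p hpD hpa using fun k : ℕ =>
    hD.exists_dist_lt a (show 0 < (δ : ℝ) / ((k : ℝ) + 2) ^ 2 by positivity)
  have hp : Tendsto p atTop (𝓝 a) := by
    refine tendsto_iff_dist_tendsto_zero.2 (squeeze_zero (fun _ => dist_nonneg)
      (fun k => (dist_comm (p k) a).trans_le (hpa k).le) ?_)
    exact tendsto_const_nhds.div_atTop ((tendsto_pow_atTop two_ne_zero).comp
      (tendsto_atTop_add_const_right _ 2 tendsto_natCast_atTop_atTop))
  have hstep : ∀ k, dist (p k) (p (k + 1)) * ((k : ℝ) + 2) ^ 2 ≤ ↑(2 * δ) := by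
    intro k
    have h₁ := hpa k
    have h₂ : dist a (p (k + 1)) < δ / ((k : ℝ) + 2) ^ 2 :=
      (hpa (k + 1)).trans_le <| div_le_div_of_nonneg_left δ.2 (by positivity) <| by
        push_cast; gcongr; linarith
    rw [← le_div_iff₀ (by positivity), NNReal.coe_mul, NNReal.coe_two]
    have hsplit : 2 * (δ : ℝ) / ((k : ℝ) + 2) ^ 2 =
        δ / ((k : ℝ) + 2) ^ 2 + δ / ((k : ℝ) + 2) ^ 2 := by
      ring
    linarith [dist_triangle_left (p k) (p (k + 1)) a]
  refine ⟨approachCurve a p, approachCurve_zero, ?_, ?_,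
    lipschitzOnWith_approachCurve hp hstep, ?_⟩
  · rw [approachCurve_one]
    exact hpD 0
  · rw [approachCurve_one, dist_comm]
    exact (hpa 0).le.trans (div_le_self δ.2 (by norm_num))
  · intro t ht
    rcases ht.1.eq_or_lt with rfl | ht0
    · rw [approachCurve_zero]
      exact mem_insert a _
    · obtain ⟨k, hk⟩ := approachCurve_mem_segment (a := a) (p := p) ⟨ht0, ht.2⟩
      exact mem_insert_of_mem a (segment_subset_segmentUnion (hpD k) (hpD (k + 1)) hk)

theorem Dense.metricallyRemovable_compl_segmentUnion (hD : Dense D) :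
    MetricallyRemovable (segmentUnion D)ᶜ := by
  intro ε hε a b
  obtain ⟨δ, hδε⟩ : ∃ δ : ℝ≥0, (δ : ℝ) = ε / 6 := ⟨⟨ε / 6, by positivity⟩, rfl⟩
  have hδ : 0 < δ := by rw [← NNReal.coe_pos, hδε]; positivity
  obtain ⟨α, hα0, hα1D, hα1, hαL, hαS⟩ := hD.exists_lipschitz_curve_from a hδ
  obtain ⟨β, hβ0, hβ1D, hβ1, hβL, hβS⟩ := hD.exists_lipschitz_curve_from b hδ
  let σ : ℝ → V := lineMap (α 1) (β 1)
  let β' : ℝ → V := fun t => β (1 - t)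
  have hσL : LipschitzOnWith (nndist (α 1) (β 1)) σ (Icc 0 1) :=
    (lipschitzWith_lineMap _ _).lipschitzOnWith
  have hασ : α 1 = curveTrans σ β' 0 := by rw [curveTrans_zero]; exact (lineMap_apply_zero _ _).symm
  have hσβ' : σ 1 = β' 0 := by simp [σ, β']
  set T := insert a (insert b (segmentUnion D))
  have hαT : MapsTo α (Icc 0 1) T := hαS.mono_right (insert_subset_insert (subset_insert _ _))
  have hσT : MapsTo σ (Icc 0 1) T := fun t ht =>
    subset_insert _ _ <| subset_insert _ _ <| segment_subset_segmentUnion hα1D hβ1D <| by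
      rw [segment_eq_image_lineMap]; exact mem_image_of_mem _ ht
  have hβ'T : MapsTo β' (Icc 0 1) T :=
    (hβS.comp fun t ht => ⟨by linarith [ht.2], by linarith [ht.1]⟩).mono_right (subset_insert _ _)
  refine ⟨curveTrans α (curveTrans σ β'), ?_, ?_, ?_, ?_, ?_⟩
  · exact continuousOn_curveTrans hαL.continuousOn
      (continuousOn_curveTrans hσL.continuousOn hβL.comp_one_sub.continuousOn hσβ') hασ
  · rw [curveTrans_zero, hα0]
  · rw [curveTrans_one, curveTrans_one]; simp [β', hβ0]
  · intro t ht hE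
    obtain rfl | rfl | hS := mapsTo_curveTrans hαT (mapsTo_curveTrans hσT hβ'T) ht
    · exact hE.2 (mem_insert _ _)
    · exact hE.2 (mem_insert_of_mem _ rfl)
    · exact hE.1 hS
  · have hdist : dist (α 1) (β 1) ≤ δ + dist a b + δ := by
      linarith [dist_triangle4 (α 1) a b (β 1), dist_comm (β 1) b]
    calc eVariationOn (curveTrans α (curveTrans σ β')) (Icc 0 1)
        = eVariationOn α (Icc 0 1) + (eVariationOn σ (Icc 0 1) + eVariationOn β' (Icc 0 1)) := by
          rw [eVariationOn_curveTrans hασ, eVariationOn_curveTrans hσβ']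
      _ ≤ ↑(2 * δ) + (↑(nndist (α 1) (β 1)) + ↑(2 * δ)) := by
          gcongr
          · simpa using hαL.eVariationOn_Icc_le
          · simpa using hσL.eVariationOn_Icc_le
          · simpa using hβL.comp_one_sub.eVariationOn_Icc_le
      _ ≤ ENNReal.ofReal (dist a b + ε) := by
          rw [← ENNReal.coe_add, ← ENNReal.coe_add, ← ENNReal.ofReal_coe_nnreal]
          refine ENNReal.ofReal_le_ofReal ?_
          simp only [NNReal.coe_add, NNReal.coe_mul, NNReal.coe_two, coe_nndist]
          linarith

end Removable

section Measure

variable {E : Type*} [NormedAddCommGroup E] [NormedSpace ℝ E] [MeasurableSpace E] [BorelSpace E]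
  [FiniteDimensional ℝ E] (μ : Measure E) [μ.IsAddHaarMeasure]

theorem addHaar_segment (h : 2 ≤ Module.finrank ℝ E) (x y : E) : μ (segment ℝ x y) = 0 := by
  refine measure_mono_null ?_
    (Measure.addHaar_affineSubspace μ (affineSpan ℝ {x, y}) fun htop => ?_)
  · rw [← convexHull_pair]
    exact convexHull_subset_affineSpan _
  · have hline := (collinear_pair ℝ x y).finrank_le_one
    rw [← direction_affineSpan, htop, AffineSubspace.direction_top, finrank_top] at hline
    omega

theorem addHaar_segmentUnion (h : 2 ≤ Module.finrank ℝ E) {D : Set E} (hD : D.Countable) :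
    μ (segmentUnion D) = 0 :=
  (measure_biUnion_null_iff hD).2 fun x _ =>
    (measure_biUnion_null_iff hD).2 fun y _ => addHaar_segment μ h x y

theorem exists_isCompact_metricallyRemovable_measure_pos (h : 2 ≤ Module.finrank ℝ E) :
    ∃ K : Set E, IsCompact K ∧ 0 < μ K ∧ MetricallyRemovable K := by
  obtain ⟨D, hDc, hD⟩ := TopologicalSpace.exists_countable_dense E
  obtain ⟨U, hSU, hU, hμU⟩ := (segmentUnion D).exists_isOpen_lt_of_lt (μ (closedBall 0 1))
    (by rw [addHaar_segmentUnion μ h hDc]; exact measure_closedBall_pos μ 0 one_pos)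
  refine ⟨closedBall 0 1 \ U, (isCompact_closedBall 0 1).diff hU,
    (tsub_pos_of_lt hμU).trans_le le_measure_sdiff,
    hD.metricallyRemovable_compl_segmentUnion.mono fun x hx hS => hx.2 (hSU hS)⟩

end Measure

/-- For every `n ≥ 2` there is a compact metrically removable set `E ⊆ ℝⁿ` of positive
`n`-dimensional Hausdorff measure. -/
theorem exists_compact_metricallyRemovable_pos_measure {n : ℕ} (hn : 2 ≤ n) :
    ∃ E : Set (EuclideanSpace ℝ (Fin n)), IsCompact E ∧ 0 < μH[(n : ℝ)] E ∧
      MetricallyRemovable E :=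
  exists_isCompact_metricallyRemovable_measure_pos μH[(n : ℝ)]
    (by rwa [finrank_euclideanSpace_fin])
end

section
/- If Ω is a domain (open connected set) in ℝⁿ and E ⊆ ℝⁿ is metrically removable, then the intrinsic metric of Ω ∖ E agrees with the intrinsic metric of Ω on Ω ∖ E: for all a, b ∈ Ω ∖ E, ρ_{Ω∖E}(a,b) = ρ_Ω(a,b). -/
open Set
open scoped ENNReal

/-- The intrinsic metric of a set `A`: the infimum of lengths of curves joining `a` to `b`
within `A` (equal to `∞` if there is no rectifiable curve joining them in `A`). -/
noncomputable def intrinsicDist {X : Type*} [MetricSpace X] (A : Set X) (a b : X) : ℝ≥0∞ :=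
  ⨅ (γ : ℝ → X) (_ : ContinuousOn γ (Icc 0 1)) (_ : γ 0 = a) (_ : γ 1 = b)
    (_ : ∀ t ∈ Icc (0:ℝ) 1, γ t ∈ A), eVariationOn γ (Icc 0 1)

/-!
Removing `E` costs nothing because a curve in `Ω` can be replaced, up to an arbitrarily small
error in length, by a chain of short removable curves. Cover a curve `γ ⊆ Ω` by an
`r`-neighbourhood inside `Ω` (compactness), cut it into pieces of diameter `< r / 2` (uniform
continuity), and move the division points slightly off `E`, which is possible because a metrically
removable set has dense complement. Consecutive points are then joined by curves avoiding `E` of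
length at most their distance plus a small error; such a curve stays in a small ball, hence in `Ω`.
-/

section

variable {X : Type*} [MetricSpace X]

lemma natCast_div_mem_Icc {i N : ℕ} (h : i ≤ N) : (i / N : ℝ) ∈ Icc (0 : ℝ) 1 :=
  unitInterval.div_mem (Nat.cast_nonneg _) (Nat.cast_nonneg _) (by exact_mod_cast h)

theorem ContinuousOn.exists_nat_dist_lt {γ : ℝ → X} (hγ : ContinuousOn γ (Icc 0 1))
    {r : ℝ} (hr : 0 < r) :
    ∃ N : ℕ, 0 < N ∧ ∀ i < N, dist (γ (i / N)) (γ ((i + 1 : ℕ) / N)) < r := by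
  obtain ⟨δ, hδ, hγδ⟩ :=
    Metric.uniformContinuousOn_iff.1 (isCompact_Icc.uniformContinuousOn_of_continuous hγ) r hr
  obtain ⟨N, hN⟩ := exists_nat_one_div_lt hδ
  refine ⟨N + 1, N.succ_pos, fun i hi => hγδ _ ?_ _ ?_ ?_⟩
  · exact natCast_div_mem_Icc hi.le
  · exact natCast_div_mem_Icc hi
  · have : ((i + 1 : ℕ) : ℝ) / (N + 1 : ℕ) - i / (N + 1 : ℕ) = 1 / (N + 1) := by
      push_cast; ring
    rwa [Real.dist_eq, abs_sub_comm, this, abs_of_pos (by positivity)]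

lemma sum_edist_natCast_div_le_eVariationOn (γ : ℝ → X) (N : ℕ) :
    ∑ i ∈ Finset.range N, edist (γ ((i + 1 : ℕ) / N)) (γ (i / N)) ≤ eVariationOn γ (Icc 0 1) :=
  eVariationOn.sum_le_of_monotoneOn_Iic (u := fun i : ℕ => (i : ℝ) / N)
    (fun _ _ _ _ hij => by simp only; gcongr) fun _ => natCast_div_mem_Icc

lemma Dense.exists_notMem_dist_le {E : Set X} (hEc : Dense Eᶜ) (p : X) {η : ℝ} (hη : 0 < η) :
    ∃ q, q ∉ E ∧ dist q p ≤ η ∧ (p ∉ E → q = p) := by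
  by_cases hp : p ∈ E
  · obtain ⟨q, hqp, hqE⟩ := Metric.dense_iff.1 hEc p η hη
    exact ⟨q, hqE, (Metric.mem_ball.1 hqp).le, absurd hp⟩
  · exact ⟨p, hp, by simpa using hη.le, fun _ => rfl⟩

end

section IntrinsicDist

variable {X : Type*} [MetricSpace X] {A B : Set X} {a b c : X}

lemma intrinsicDist_le_eVariationOn {γ : ℝ → X} (hc : ContinuousOn γ (Icc 0 1))
    (h0 : γ 0 = a) (h1 : γ 1 = b) (hm : ∀ t ∈ Icc (0:ℝ) 1, γ t ∈ A) :
    intrinsicDist A a b ≤ eVariationOn γ (Icc 0 1) :=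
  iInf_le_of_le γ (iInf_le_of_le hc (iInf_le_of_le h0 (iInf_le_of_le h1 (iInf_le _ hm))))

lemma le_intrinsicDist {d : ℝ≥0∞}
    (h : ∀ γ : ℝ → X, ContinuousOn γ (Icc 0 1) → γ 0 = a → γ 1 = b →
      (∀ t ∈ Icc (0:ℝ) 1, γ t ∈ A) → d ≤ eVariationOn γ (Icc 0 1)) :
    d ≤ intrinsicDist A a b := by
  simpa only [intrinsicDist, le_iInf_iff] using h

lemma intrinsicDist_anti (h : A ⊆ B) (a b : X) : intrinsicDist B a b ≤ intrinsicDist A a b :=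
  le_intrinsicDist fun _ hc h0 h1 hm =>
    intrinsicDist_le_eVariationOn hc h0 h1 fun t ht => h (hm t ht)

lemma intrinsicDist_self (ha : a ∈ A) : intrinsicDist A a a = 0 :=
  nonpos_iff_eq_zero.1 <| (intrinsicDist_le_eVariationOn continuousOn_const rfl rfl
    fun _ _ => ha).trans_eq <| eVariationOn.constant_on <| subsingleton_singleton.anti <|
      image_subset_iff.2 fun _ _ => rfl

lemma intrinsicDist_le_eVariationOn_Icc {γ : ℝ → X} {s t : ℝ} (hst : s ≤ t)
    (hc : ContinuousOn γ (Icc s t)) (hm : ∀ u ∈ Icc s t, γ u ∈ A) :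
    intrinsicDist A (γ s) (γ t) ≤ eVariationOn γ (Icc s t) := by
  set φ : ℝ → ℝ := fun u => s + (t - s) * u
  have hφ : MapsTo φ (Icc 0 1) (Icc s t) := fun u hu =>
    ⟨by nlinarith [hu.1], by nlinarith [hu.2]⟩
  have hφ_mono : Monotone φ := fun u v huv => by
    simp only [φ]; gcongr
  calc intrinsicDist A (γ s) (γ t)
      ≤ eVariationOn (γ ∘ φ) (Icc 0 1) :=
        intrinsicDist_le_eVariationOn (hc.comp (by fun_prop) hφ) (by simp [φ]) (by simp [φ])
          fun u hu => hm _ (hφ hu)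
    _ ≤ eVariationOn γ (Icc s t) :=
        eVariationOn.comp_le_of_monotoneOn γ φ (hφ_mono.monotoneOn _) hφ

lemma intrinsicDist_le_eVariationOn_add {γ₁ γ₂ : ℝ → X}
    (hc₁ : ContinuousOn γ₁ (Icc 0 1)) (h0₁ : γ₁ 0 = a) (h1₁ : γ₁ 1 = b)
    (hm₁ : ∀ t ∈ Icc (0:ℝ) 1, γ₁ t ∈ A)
    (hc₂ : ContinuousOn γ₂ (Icc 0 1)) (h0₂ : γ₂ 0 = b) (h1₂ : γ₂ 1 = c)
    (hm₂ : ∀ t ∈ Icc (0:ℝ) 1, γ₂ t ∈ A) :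
    intrinsicDist A a c ≤ eVariationOn γ₁ (Icc 0 1) + eVariationOn γ₂ (Icc 0 1) := by
  set γ : ℝ → X := fun u => if u ≤ 1 then γ₁ u else γ₂ (u - 1)
  have hmaps : MapsTo (· - 1 : ℝ → ℝ) (Icc 1 2) (Icc 0 1) := fun u hu =>
    ⟨by linarith [hu.1], by linarith [hu.2]⟩
  have hγ₁ : EqOn γ γ₁ (Icc 0 1) := fun u hu => if_pos hu.2
  have hγ₂ : EqOn γ (γ₂ ∘ (· - 1)) (Icc 1 2) := by
    intro u hu
    rcases hu.1.eq_or_lt with rfl | h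
    · simp [γ, h1₁, h0₂]
    · simp [γ, not_le.2 h]
  have hc : ContinuousOn γ (Icc 0 2) := by
    rw [← Icc_union_Icc_eq_Icc zero_le_one one_le_two]
    exact (hc₁.congr hγ₁).union_of_isClosed
      ((hc₂.comp (continuous_sub_right 1).continuousOn hmaps).congr hγ₂)
      isClosed_Icc isClosed_Icc
  have hm : ∀ u ∈ Icc (0:ℝ) 2, γ u ∈ A := by
    intro u hu
    by_cases h : u ≤ 1
    · exact hγ₁ ⟨hu.1, h⟩ ▸ hm₁ u ⟨hu.1, h⟩
    · have hu' : u ∈ Icc (1:ℝ) 2 := ⟨(not_le.1 h).le, hu.2⟩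
      exact hγ₂ hu' ▸ hm₂ _ (hmaps hu')
  have hγ0 : γ 0 = a := by simp [γ, h0₁]
  have hγ2 : γ 2 = c := by norm_num [γ, h1₂]
  calc intrinsicDist A a c
      ≤ eVariationOn γ (Icc 0 2) :=
        hγ0 ▸ hγ2 ▸ intrinsicDist_le_eVariationOn_Icc zero_le_two hc hm
    _ = eVariationOn γ (Icc 0 1) + eVariationOn γ (Icc 1 2) := by
      simpa using (eVariationOn.Icc_add_Icc γ zero_le_one one_le_two (mem_univ _)).symm
    _ ≤ eVariationOn γ₁ (Icc 0 1) + eVariationOn γ₂ (Icc 0 1) := by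
      rw [eVariationOn.eq_of_eqOn hγ₁, eVariationOn.eq_of_eqOn hγ₂]
      gcongr
      exact eVariationOn.comp_le_of_monotoneOn γ₂ _ (fun x _ y _ h => by linarith) hmaps

lemma intrinsicDist_triangle (A : Set X) (a b c : X) :
    intrinsicDist A a c ≤ intrinsicDist A a b + intrinsicDist A b c :=
  ENNReal.le_iInf_add_iInf fun _ _ => ENNReal.le_iInf_add_iInf fun hc₁ hc₂ =>
    ENNReal.le_iInf_add_iInf fun h0₁ h0₂ => ENNReal.le_iInf_add_iInf fun h1₁ h1₂ =>
      ENNReal.le_iInf_add_iInf fun hm₁ hm₂ =>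
        intrinsicDist_le_eVariationOn_add hc₁ h0₁ h1₁ hm₁ hc₂ h0₂ h1₂ hm₂

lemma intrinsicDist_le_range_sum_intrinsicDist (q : ℕ → X) (hq0 : q 0 ∈ A) (N : ℕ) :
    intrinsicDist A (q 0) (q N) ≤
      ∑ i ∈ Finset.range N, intrinsicDist A (q i) (q (i + 1)) := by
  induction N with
  | zero => simp [intrinsicDist_self hq0]
  | succ N ih =>
    rw [Finset.sum_range_succ]
    exact (intrinsicDist_triangle A _ (q N) _).trans (add_le_add_left ih _)

end IntrinsicDist

namespace MetricallyRemovable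

open Metric Topology

variable {X : Type*} [MetricSpace X] {E Ω : Set X}

lemma dense_compl [∀ x : X, (𝓝[≠] x).NeBot] (hE : MetricallyRemovable E) : Dense Eᶜ := by
  refine Metric.dense_iff.2 fun p η hη => ?_
  obtain ⟨b, hbp, hbη⟩ :=
    Filter.nonempty_of_mem (f := 𝓝[≠] p) (inter_mem_nhdsWithin {p}ᶜ (ball_mem_nhds p hη))
  replace hbp : 0 < dist b p := dist_pos.2 hbp
  obtain ⟨c, hc, hc0, hc1, hcE, -⟩ := hE 1 one_pos p b
  -- a point of the curve halfway out from `p` to `b` is neither endpoint, so it avoids `E`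
  obtain ⟨t, ht, hct⟩ := intermediate_value_Icc zero_le_one
    ((continuous_id.dist continuous_const).comp_continuousOn hc (g := fun x => dist x p))
    (show dist b p / 2 ∈ Icc (dist (c 0) p) (dist (c 1) p) by
      rw [hc0, hc1, dist_self]; constructor <;> linarith)
  simp only [Function.comp] at hct
  refine ⟨c t, mem_ball.2 (by linarith [mem_ball.1 hbη]), fun hcE' => hcE t ht ⟨hcE', ?_⟩⟩
  rintro (h | h) <;> rw [h] at hct
  · rw [dist_self] at hct; linarith
  · linarith

lemma intrinsicDist_diff_le_of_closedBall_subset (hE : MetricallyRemovable E) {x y : X}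
    (hx : x ∉ E) (hy : y ∉ E) {ε : ℝ} (hε : 0 < ε)
    (hΩ : closedBall x (dist x y + ε) ⊆ Ω) :
    intrinsicDist (Ω \ E) x y ≤ ENNReal.ofReal (dist x y + ε) := by
  obtain ⟨c, hc, hc0, hc1, hcE, hvar⟩ := hE ε hε x y
  refine (intrinsicDist_le_eVariationOn (A := Ω \ E) hc hc0 hc1
    fun t ht => ⟨hΩ ?_, fun hct => ?_⟩).trans hvar
  · rw [mem_closedBall, ← edist_le_ofReal (by positivity)]
    have hedist : edist (c t) x ≤ eVariationOn c (Icc 0 1) :=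
      hc0 ▸ eVariationOn.edist_le c ht ⟨le_rfl, zero_le_one⟩
    exact hedist.trans hvar
  · refine hcE t ht ⟨hct, ?_⟩
    rintro (h | h) <;> rw [h] at hct
    exacts [hx hct, hy hct]

lemma intrinsicDist_diff_le_of_dist_le (hE : MetricallyRemovable E) {p p' q q' : X} {η : ℝ}
    (hη : 0 < η) (hq : q ∉ E) (hq' : q' ∉ E) (hqp : dist q p ≤ η) (hqp' : dist q' p' ≤ η)
    (hΩ : closedBall p (dist p p' + 4 * η) ⊆ Ω) :
    intrinsicDist (Ω \ E) q q' ≤ ENNReal.ofReal (dist p p' + 3 * η) := by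
  have hqq' : dist q q' ≤ dist p p' + 2 * η := by
    linarith [dist_triangle4 q p p' q', dist_comm q' p']
  calc intrinsicDist (Ω \ E) q q'
      ≤ ENNReal.ofReal (dist q q' + η) :=
        hE.intrinsicDist_diff_le_of_closedBall_subset hq hq' hη fun z hz =>
          hΩ <| mem_closedBall.2 <| by linarith [dist_triangle z q p, mem_closedBall.1 hz]
    _ ≤ ENNReal.ofReal (dist p p' + 3 * η) := ENNReal.ofReal_le_ofReal (by linarith)

theorem intrinsicDist_diff_le_eVariationOn (hE : MetricallyRemovable E) (hEc : Dense Eᶜ)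
    (hΩ : IsOpen Ω) {γ : ℝ → X} (hc : ContinuousOn γ (Icc 0 1))
    (hm : ∀ t ∈ Icc (0:ℝ) 1, γ t ∈ Ω) (h0 : γ 0 ∉ E) (h1 : γ 1 ∉ E) :
    intrinsicDist (Ω \ E) (γ 0) (γ 1) ≤ eVariationOn γ (Icc 0 1) := by
  refine ENNReal.le_of_forall_pos_le_add fun ε hε _ => ?_
  obtain ⟨r, hr, hrΩ⟩ := (isCompact_Icc.image_of_continuousOn hc).exists_thickening_subset_open
    hΩ (image_subset_iff.2 hm)
  obtain ⟨N, hN, hpart⟩ := hc.exists_nat_dist_lt (half_pos hr)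
  set p : ℕ → X := fun i => γ (i / N)
  have hp0 : p 0 = γ 0 := by simp [p]
  have hpN : p N = γ 1 := by simp [p, hN.ne']
  -- `η ≤ r / 8` keeps each joining curve within `r` of `γ`, and `3 N η ≤ ε` bounds the total error
  set η : ℝ := min (r / 8) (ε / (3 * N))
  have hη : 0 < η := lt_min (by positivity) (by positivity)
  choose q hqE hqp hqeq using fun i => hEc.exists_notMem_dist_le (p i) hη
  have hq0 : q 0 = γ 0 := (hqeq 0 (hp0 ▸ h0)).trans hp0
  have hqN : q N = γ 1 := (hqeq N (hpN ▸ h1)).trans hpN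
  have hstep : ∀ i < N, intrinsicDist (Ω \ E) (q i) (q (i + 1)) ≤
      edist (p (i + 1)) (p i) + ENNReal.ofReal (3 * η) := by
    intro i hi
    have hball : closedBall (p i) (dist (p i) (p (i + 1)) + 4 * η) ⊆ Ω := fun z hz =>
      hrΩ <| mem_thickening_iff.2 ⟨p i, mem_image_of_mem γ (natCast_div_mem_Icc hi.le), by
        linarith [mem_closedBall.1 hz, hpart i hi, min_le_left (r / 8) (ε / (3 * N))]⟩
    refine (hE.intrinsicDist_diff_le_of_dist_le hη (hqE i) (hqE (i + 1)) (hqp i) (hqp (i + 1))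
      hball).trans_eq ?_
    rw [ENNReal.ofReal_add dist_nonneg (by positivity), edist_dist, dist_comm]
  have hNη : (N : ℝ≥0∞) * ENNReal.ofReal (3 * η) ≤ ε := by
    rw [← ENNReal.ofReal_natCast, ← ENNReal.ofReal_mul (Nat.cast_nonneg N),
      ← ENNReal.ofReal_coe_nnreal]
    refine ENNReal.ofReal_le_ofReal ?_
    calc (N : ℝ) * (3 * η) ≤ N * (3 * (ε / (3 * N))) := by gcongr; exact min_le_right _ _
      _ = ε := by field_simp
  calc intrinsicDist (Ω \ E) (γ 0) (γ 1)
      ≤ ∑ i ∈ Finset.range N, intrinsicDist (Ω \ E) (q i) (q (i + 1)) :=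
        hq0 ▸ hqN ▸ intrinsicDist_le_range_sum_intrinsicDist q
          (hq0 ▸ ⟨hm 0 ⟨le_rfl, zero_le_one⟩, h0⟩) N
    _ ≤ ∑ i ∈ Finset.range N, (edist (p (i + 1)) (p i) + ENNReal.ofReal (3 * η)) :=
        Finset.sum_le_sum fun i hi => hstep i (Finset.mem_range.1 hi)
    _ = ∑ i ∈ Finset.range N, edist (p (i + 1)) (p i) + N * ENNReal.ofReal (3 * η) := by
        rw [Finset.sum_add_distrib, Finset.sum_const, Finset.card_range, nsmul_eq_mul]
    _ ≤ eVariationOn γ (Icc 0 1) + ε :=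
        add_le_add (sum_edist_natCast_div_le_eVariationOn γ N) hNη

theorem intrinsicDist_diff_le_intrinsicDist (hE : MetricallyRemovable E) (hEc : Dense Eᶜ)
    (hΩ : IsOpen Ω) {a b : X} (ha : a ∉ E) (hb : b ∉ E) :
    intrinsicDist (Ω \ E) a b ≤ intrinsicDist Ω a b :=
  le_intrinsicDist fun _ hc h0 h1 hm =>
    h0 ▸ h1 ▸ hE.intrinsicDist_diff_le_eVariationOn hEc hΩ hc hm (h0 ▸ ha) (h1 ▸ hb)

end MetricallyRemovable

theorem intrinsicDist_diff_eq_general {n : ℕ} (Ω E : Set (EuclideanSpace ℝ (Fin n)))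
    (hopen : IsOpen Ω) (hE : MetricallyRemovable E) :
    ∀ a ∈ Ω \ E, ∀ b ∈ Ω \ E, intrinsicDist (Ω \ E) a b = intrinsicDist Ω a b := by
  intro a ha b hb
  refine le_antisymm ?_ (intrinsicDist_anti sdiff_subset a b)
  rcases eq_or_ne a b with rfl | hab
  · exact (intrinsicDist_self ha).trans_le zero_le
  have : Nontrivial (EuclideanSpace ℝ (Fin n)) := ⟨a, b, hab⟩
  exact hE.intrinsicDist_diff_le_intrinsicDist hE.dense_compl hopen ha.2 hb.2

/-- If `Ω ⊆ ℝⁿ` is a domain and `E` is metrically removable, then the intrinsic metric of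
`Ω \ E` agrees with that of `Ω` on `Ω \ E`. -/
theorem intrinsicDist_diff_eq {n : ℕ} (Ω E : Set (EuclideanSpace ℝ (Fin n)))
    (hopen : IsOpen Ω) (hconn : IsConnected Ω) (hE : MetricallyRemovable E) :
    ∀ a ∈ Ω \ E, ∀ b ∈ Ω \ E, intrinsicDist (Ω \ E) a b = intrinsicDist Ω a b :=
  intrinsicDist_diff_eq_general Ω E hopen hE
end

section
/- If E = ⋃_{k=1}^∞ E_k where each E_k ⊆ ℝⁿ is closed and metrically removable, then E is metrically removable. -/
/-!
Let `G = ⋂ k, (E k)ᶜ`. A metrically removable set has dense complement, so `G` is dense by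
Baire, and removability of `E k` says that any two points of `(E k)ᶜ` are joined inside `(E k)ᶜ`
by curves of length arbitrarily close to their distance. This property passes to `G`: starting
from a short curve between two points of `G`, modify it successively so that it avoids
`E 0, E 1, …`. Each modification replaces short sub-arcs by nearly geodesic arcs in `(E n)ᶜ`
between nearby points, so it is uniformly small, adds little length, and keeps a positive
distance from the sets avoided so far; the uniform limit avoids every `E k`, and by lower
semicontinuity of length it is still short. Finally, endpoints `a, b` outside `G` are reached by
concatenating infinitely many short curves in `G` between points converging to `a` (resp. `b`),
parametrized on dyadic intervals.
-/

open Set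

open Filter Topology
open scoped ENNReal

section Gluing

variable {X : Type*} {u v w : ℝ}

noncomputable def rescale (u v t : ℝ) : ℝ := (t - u) / (v - u)

@[simp] lemma rescale_left : rescale u v u = 0 := by simp [rescale]

lemma rescale_right (h : u < v) : rescale u v v = 1 := div_self (sub_ne_zero.2 h.ne')

lemma continuous_rescale : Continuous (rescale u v) := by unfold rescale; fun_prop

lemma monotone_rescale (h : u ≤ v) : Monotone (rescale u v) :=
  fun _ _ hst => div_le_div_of_nonneg_right (sub_le_sub_right hst u) (sub_nonneg.2 h)

lemma image_rescale_Icc (h : u < v) : rescale u v '' Icc u v = Icc 0 1 := by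
  have hvu : 0 < v - u := sub_pos.2 h
  ext s
  constructor
  · rintro ⟨t, ⟨hut, htv⟩, rfl⟩
    exact ⟨div_nonneg (by linarith) hvu.le, (div_le_one hvu).2 (by linarith)⟩
  · rintro ⟨hs0, hs1⟩
    refine ⟨u + s * (v - u), ⟨by nlinarith, by nlinarith⟩, ?_⟩
    simp [rescale, hvu.ne']

lemma mapsTo_rescale_Icc (h : u < v) : MapsTo (rescale u v) (Icc u v) (Icc 0 1) :=
  image_rescale_Icc h ▸ mapsTo_image _ _

section Ite

variable {f g : ℝ → X}

lemma eqOn_ite_left : EqOn (fun t => if t ≤ w then f t else g t) f (Icc u w) :=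
  fun _ ht => if_pos ht.2

lemma eqOn_ite_right (hfg : f w = g w) :
    EqOn (fun t => if t ≤ w then f t else g t) g (Icc w v) := by
  intro t ht
  rcases ht.1.eq_or_lt with rfl | hwt
  · simp [hfg]
  · simp [not_le.2 hwt]

lemma forall_Icc_ite {P : ℝ → X → Prop} (hf : ∀ t ∈ Icc u w, P t (f t))
    (hg : ∀ t ∈ Icc w v, P t (g t)) :
    ∀ t ∈ Icc u v, P t (if t ≤ w then f t else g t) := by
  intro t ht
  split_ifs with htw
  · exact hf t ⟨ht.1, htw⟩
  · exact hg t ⟨(not_le.1 htw).le, ht.2⟩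

lemma continuousOn_Icc_ite [TopologicalSpace X] (huw : u ≤ w) (hwv : w ≤ v)
    (hf : ContinuousOn f (Icc u w)) (hg : ContinuousOn g (Icc w v)) (hfg : f w = g w) :
    ContinuousOn (fun t => if t ≤ w then f t else g t) (Icc u v) := by
  rw [← Icc_union_Icc_eq_Icc huw hwv]
  exact (hf.congr eqOn_ite_left).union_of_isClosed (hg.congr (eqOn_ite_right hfg))
    isClosed_Icc isClosed_Icc

variable [PseudoEMetricSpace X]

lemma eVariationOn_Icc_add_Icc (f : ℝ → X) (huw : u ≤ w) (hwv : w ≤ v) :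
    eVariationOn f (Icc u w) + eVariationOn f (Icc w v) = eVariationOn f (Icc u v) := by
  simpa only [univ_inter] using eVariationOn.Icc_add_Icc f huw hwv (mem_univ w)

lemma eVariationOn_Icc_ite (huw : u ≤ w) (hwv : w ≤ v) (hfg : f w = g w) :
    eVariationOn (fun t => if t ≤ w then f t else g t) (Icc u v) =
      eVariationOn f (Icc u w) + eVariationOn g (Icc w v) := by
  rw [← eVariationOn_Icc_add_Icc _ huw hwv, eVariationOn.eq_of_eqOn eqOn_ite_left,
    eVariationOn.eq_of_eqOn (eqOn_ite_right hfg)]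

end Ite

lemma ContinuousOn.comp_rescale [TopologicalSpace X] {f : ℝ → X} (hf : ContinuousOn f (Icc 0 1))
    (h : u < v) : ContinuousOn (f ∘ rescale u v) (Icc u v) :=
  hf.comp continuous_rescale.continuousOn (mapsTo_rescale_Icc h)

variable [PseudoEMetricSpace X]

lemma eVariationOn_comp_rescale (f : ℝ → X) (h : u < v) :
    eVariationOn (f ∘ rescale u v) (Icc u v) = eVariationOn f (Icc 0 1) := by
  rw [eVariationOn.comp_eq_of_monotoneOn _ _ ((monotone_rescale h.le).monotoneOn _),
    image_rescale_Icc h]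

lemma eVariationOn_comp_one_sub (f : ℝ → X) :
    eVariationOn (fun t => f (1 - t)) (Icc 0 1) = eVariationOn f (Icc 0 1) := by
  have hanti : AntitoneOn (fun t : ℝ => 1 - t) (Icc 0 1) := fun _ _ _ _ hst => by
    simp only; linarith
  rw [← Function.comp_def, eVariationOn.comp_eq_of_antitoneOn f _ hanti, image_const_sub_Icc]
  norm_num

lemma exists_concat {f g : ℝ → X} (hf : ContinuousOn f (Icc 0 1)) (hg : ContinuousOn g (Icc 0 1))
    (hfg : f 1 = g 0) :
    ∃ γ : ℝ → X, ContinuousOn γ (Icc 0 1) ∧ γ 0 = f 0 ∧ γ 1 = g 1 ∧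
      γ '' Icc 0 1 ⊆ f '' Icc 0 1 ∪ g '' Icc 0 1 ∧
      eVariationOn γ (Icc 0 1) = eVariationOn f (Icc 0 1) + eVariationOn g (Icc 0 1) := by
  have h₀ : (0 : ℝ) < 1 / 2 := by norm_num
  have h₁ : (1 / 2 : ℝ) < 1 := by norm_num
  have hj : (f ∘ rescale 0 (1 / 2)) (1 / 2) = (g ∘ rescale (1 / 2) 1) (1 / 2) := by
    rw [Function.comp_apply, Function.comp_apply, rescale_right h₀, rescale_left, hfg]
  refine ⟨fun t => if t ≤ 1 / 2 then (f ∘ rescale 0 (1 / 2)) t else (g ∘ rescale (1 / 2) 1) t,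
    continuousOn_Icc_ite h₀.le h₁.le (hf.comp_rescale h₀) (hg.comp_rescale h₁) hj,
    by simp, ?_, ?_, ?_⟩
  · simp only [if_neg (not_le.2 h₁), Function.comp_apply, rescale_right h₁]
  · rintro _ ⟨t, ht, rfl⟩
    refine forall_Icc_ite (P := fun _ x => x ∈ f '' Icc 0 1 ∪ g '' Icc 0 1) ?_ ?_ t ht
    · exact fun s hs => .inl (mem_image_of_mem f (mapsTo_rescale_Icc h₀ hs))
    · exact fun s hs => .inr (mem_image_of_mem g (mapsTo_rescale_Icc h₁ hs))
  · rw [eVariationOn_Icc_ite h₀.le h₁.le hj, eVariationOn_comp_rescale _ h₀,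
      eVariationOn_comp_rescale _ h₁]

end Gluing

section Variation

variable {α E : Type*} [LinearOrder α]

lemma eVariationOn_le_of_tendsto [PseudoEMetricSpace E] {ι : Type*} {l : Filter ι} [l.NeBot]
    {F : ι → α → E} {f : α → E} {s : Set α}
    (hF : ∀ x ∈ s, Tendsto (fun i => F i x) l (𝓝 (f x))) {L : ℝ≥0∞}
    (hL : ∀ᶠ i in l, eVariationOn (F i) s ≤ L) : eVariationOn f s ≤ L := by
  by_contra! h
  obtain ⟨i, hi, hi'⟩ := (hL.and (eVariationOn.lowerSemicontinuous_aux hF h)).exists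
  exact (hi'.trans_le hi).false

lemma eVariationOn_Icc_le_of_continuousWithinAt [PseudoEMetricSpace E] [TopologicalSpace α]
    [OrderTopology α] [DenselyOrdered α] {f : α → E} {a b : α}
    (hf : ContinuousWithinAt f (Ici a) a) {L : ℝ≥0∞}
    (h : ∀ s ∈ Ioc a b, eVariationOn f (Icc s b) ≤ L) : eVariationOn f (Icc a b) ≤ L := by
  rw [← eVariationOn.eVariationOn_Ioc_eq_Icc_of_continuousWithinAt hf]
  by_contra! hlt
  obtain ⟨s, hs, t, ht, -, hst⟩ := eVariationOn.exists_lt_eVariationOn_inter_Icc hlt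
  have hsub : Ioc a b ∩ Icc s t ⊆ Icc s b := fun x hx => ⟨hx.2.1, hx.1.2⟩
  exact (hst.trans_le ((eVariationOn.mono f hsub).trans (h s hs))).false

lemma dist_le_of_eVariationOn_le [PseudoMetricSpace E] {f : α → E} {s : Set α} {L : ℝ}
    (hL : 0 ≤ L) (h : eVariationOn f s ≤ ENNReal.ofReal L) {x y : α} (hx : x ∈ s) (hy : y ∈ s) :
    dist (f x) (f y) ≤ L := by
  rw [← edist_le_ofReal hL]
  exact (eVariationOn.edist_le f hx hy).trans h

end Variation

section Removability

variable {X : Type*} [MetricSpace X]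

/-- The restriction of the metric to `G` is a length metric. -/
def JoinedByShortCurves (G : Set X) : Prop :=
  ∀ p ∈ G, ∀ q ∈ G, ∀ σ > 0, ∃ γ : ℝ → X, ContinuousOn γ (Icc 0 1) ∧ γ 0 = p ∧ γ 1 = q ∧
    MapsTo γ (Icc 0 1) G ∧ eVariationOn γ (Icc 0 1) ≤ ENNReal.ofReal (dist p q + σ)

namespace MetricallyRemovable

lemma of_subsingleton [Subsingleton X] (E : Set X) : MetricallyRemovable E := by
  intro ε _ a b
  refine ⟨fun _ => a, continuousOn_const, rfl, Subsingleton.elim a b,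
    fun _ _ h => h.2 (mem_insert a _), ?_⟩
  rw [eVariationOn.constant_on (subsingleton_of_subsingleton)]
  exact zero_le

lemma joinedByShortCurves_compl {E : Set X} (hE : MetricallyRemovable E) :
    JoinedByShortCurves Eᶜ := by
  intro p hp q hq σ hσ
  obtain ⟨γ, hγ, h0, h1, hav, hvar⟩ := hE σ hσ p q
  refine ⟨γ, hγ, h0, h1, fun t ht hmem => hav t ht ⟨hmem, ?_⟩, hvar⟩
  rintro (h | h)
  · exact hp (h ▸ hmem)
  · exact hq (h ▸ hmem)

lemma dense_compl_s8 {Y : Type*} [NormedAddCommGroup Y] [NormedSpace ℝ Y] [Nontrivial Y]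
    {E : Set Y} (hE : MetricallyRemovable E) : Dense Eᶜ := by
  rw [Metric.dense_iff]
  intro x r hr
  obtain ⟨v, hv⟩ := NormedSpace.exists_lt_norm ℝ Y r
  obtain ⟨γ, hγ, h0, h1, hav, -⟩ := hE 1 one_pos x (x + v)
  -- the curve leaves `ball x r`, so it meets the sphere of radius `r / 2` about `x`
  obtain ⟨t, ht, htx⟩ : r / 2 ∈ (fun t => dist (γ t) x) '' Icc 0 1 :=
    intermediate_value_Icc zero_le_one (by fun_prop)
      ⟨by simp [h0]; positivity, by simp [h1]; linarith⟩
  simp only at htx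
  refine ⟨γ t, by rw [Metric.mem_ball, htx]; linarith, fun hmem => hav t ht ⟨hmem, ?_⟩⟩
  rintro (h | h)
  · rw [h, dist_self] at htx; linarith
  · rw [h] at htx; simp at htx; linarith

end MetricallyRemovable

end Removability

lemma exists_split_of_le_mul {u v h : ℝ} {N : ℕ} (huv : u < v) (hlen : v - u ≤ (N + 2) * h) :
    ∃ w, u < w ∧ w < v ∧ w - u ≤ h ∧ v - w ≤ (N + 1) * h := by
  have hN : (1 : ℝ) < N + 2 := by linarith [N.cast_nonneg (α := ℝ)]
  have hd : 0 < (v - u) / (N + 2) := div_pos (sub_pos.2 huv) (by linarith)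
  refine ⟨u + (v - u) / (N + 2), by linarith, by linarith [div_lt_self (sub_pos.2 huv) hN], ?_, ?_⟩
  · rw [add_sub_cancel_left, div_le_iff₀ (by linarith)]
    linarith
  · have : v - (u + (v - u) / (N + 2)) = (v - u) / (N + 2) * (N + 1) := by field_simp; ring
    rw [this, mul_comm]
    gcongr
    rw [div_le_iff₀ (by linarith)]
    linarith

namespace JoinedByShortCurves

variable {X : Type*} [MetricSpace X] {G : Set X} {γ : ℝ → X} {η ρ σ : ℝ} {u v : ℝ} {p q : X}

lemma exists_near_on_Icc (hG : JoinedByShortCurves G) (hσ : 0 < σ) (huv : u < v)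
    (hp : p ∈ G) (hq : q ∈ G) (hpu : dist p (γ u) ≤ η) (hqv : dist q (γ v) ≤ η)
    (hosc : ∀ s ∈ Icc u v, ∀ t ∈ Icc u v, dist (γ s) (γ t) ≤ ρ) :
    ∃ c : ℝ → X, ContinuousOn c (Icc u v) ∧ c u = p ∧ c v = q ∧ MapsTo c (Icc u v) G ∧
      eVariationOn c (Icc u v) ≤ eVariationOn γ (Icc u v) + ENNReal.ofReal (2 * η + σ) ∧
      ∀ t ∈ Icc u v, dist (c t) (γ t) ≤ 3 * η + 2 * ρ + σ := by
  obtain ⟨c, hc, h0, h1, hcG, hvar⟩ := hG p hp q hq σ hσ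
  have hu : u ∈ Icc u v := left_mem_Icc.2 huv.le
  have hv : v ∈ Icc u v := right_mem_Icc.2 huv.le
  have hη : 0 ≤ η := dist_nonneg.trans hpu
  have hpq : dist p q ≤ 2 * η + dist (γ u) (γ v) := by
    linarith [dist_triangle4 p (γ u) (γ v) q, dist_comm q (γ v)]
  refine ⟨c ∘ rescale u v, hc.comp_rescale huv, by simp [h0], by simp [rescale_right huv, h1],
    hcG.comp (mapsTo_rescale_Icc huv), ?_, fun t ht => ?_⟩
  · rw [eVariationOn_comp_rescale _ huv]
    calc eVariationOn c (Icc 0 1) ≤ ENNReal.ofReal (dist p q + σ) := hvar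
      _ ≤ ENNReal.ofReal (dist (γ u) (γ v)) + ENNReal.ofReal (2 * η + σ) := by
          rw [← ENNReal.ofReal_add dist_nonneg (by positivity)]
          exact ENNReal.ofReal_le_ofReal (by linarith)
      _ ≤ eVariationOn γ (Icc u v) + ENNReal.ofReal (2 * η + σ) := by
          rw [← edist_dist]
          gcongr
          exact eVariationOn.edist_le γ hu hv
  · have hct := dist_le_of_eVariationOn_le (by positivity) hvar (mapsTo_rescale_Icc huv ht)
      (left_mem_Icc.2 zero_le_one)
    rw [h0] at hct
    simp only [Function.comp_apply]
    linarith [dist_triangle4 (c (rescale u v t)) p (γ u) (γ t), hosc u hu t ht, hosc u hu v hv]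

/-- Subdivide `[u, v]` into `N + 1` intervals of length at most `h`, pick points of `G` near the
images of the nodes under `γ`, and join consecutive ones by short curves in `G`. -/
lemma exists_near_on_Icc_of_le_mul (hG : JoinedByShortCurves G) (hGd : Dense G) (hσ : 0 < σ)
    (hη : 0 < η) {h : ℝ} (hq : q ∈ G) (hqv : dist q (γ v) ≤ η) (N : ℕ) :
    ∀ u < v, v - u ≤ (N + 1) * h →
      (∀ s ∈ Icc u v, ∀ t ∈ Icc u v, dist s t ≤ h → dist (γ s) (γ t) ≤ ρ) →
      ∀ p ∈ G, dist p (γ u) ≤ η →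
      ∃ c : ℝ → X, ContinuousOn c (Icc u v) ∧ c u = p ∧ c v = q ∧ MapsTo c (Icc u v) G ∧
        eVariationOn c (Icc u v) ≤
          eVariationOn γ (Icc u v) + (N + 1) * ENNReal.ofReal (2 * η + σ) ∧
        ∀ t ∈ Icc u v, dist (c t) (γ t) ≤ 3 * η + 2 * ρ + σ := by
  induction N with
  | zero =>
    intro u huv hlen hosc p hp hpu
    rw [CharP.cast_eq_zero, zero_add, one_mul] at hlen
    simpa using hG.exists_near_on_Icc hσ huv hp hq hpu hqv fun s hs t ht =>
      hosc s hs t ht ((Real.dist_le_of_mem_Icc hs ht).trans hlen)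
  | succ N ih =>
    intro u huv hlen hosc p hp hpu
    obtain ⟨w, huw, hwv, hwu, hvw⟩ := exists_split_of_le_mul huv (by exact_mod_cast hlen)
    have hsub₁ : Icc u w ⊆ Icc u v := Icc_subset_Icc_right hwv.le
    have hsub₂ : Icc w v ⊆ Icc u v := Icc_subset_Icc_left huw.le
    obtain ⟨z, hzG, hz⟩ := hGd.exists_dist_lt (γ w) hη
    rw [dist_comm] at hz
    obtain ⟨c₁, hc₁, hc₁u, hc₁w, hc₁G, hc₁var, hc₁d⟩ :=
      hG.exists_near_on_Icc hσ huw hp hzG hpu hz.le fun s hs t ht =>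
        hosc s (hsub₁ hs) t (hsub₁ ht) ((Real.dist_le_of_mem_Icc hs ht).trans hwu)
    obtain ⟨c₂, hc₂, hc₂w, hc₂v, hc₂G, hc₂var, hc₂d⟩ :=
      ih w hwv hvw (fun s hs t ht => hosc s (hsub₂ hs) t (hsub₂ ht)) z hzG hz.le
    have hj : c₁ w = c₂ w := hc₁w.trans hc₂w.symm
    refine ⟨fun t => if t ≤ w then c₁ t else c₂ t, continuousOn_Icc_ite huw.le hwv.le hc₁ hc₂ hj,
      by simp [huw.le, hc₁u], by simp [not_le.2 hwv, hc₂v],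
      fun t ht => forall_Icc_ite (P := fun _ x => x ∈ G) (fun _ hs => hc₁G hs)
        (fun _ hs => hc₂G hs) t ht, ?_,
      forall_Icc_ite (P := fun t x => dist x (γ t) ≤ 3 * η + 2 * ρ + σ) hc₁d hc₂d⟩
    rw [eVariationOn_Icc_ite huw.le hwv.le hj, ← eVariationOn_Icc_add_Icc γ huw.le hwv.le]
    calc _ ≤ (eVariationOn γ (Icc u w) + ENNReal.ofReal (2 * η + σ)) +
          (eVariationOn γ (Icc w v) + (N + 1) * ENNReal.ofReal (2 * η + σ)) :=
          add_le_add hc₁var hc₂var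
      _ = _ := by push_cast; ring

lemma exists_near (hG : JoinedByShortCurves G) (hGd : Dense G) (hγ : ContinuousOn γ (Icc 0 1))
    (h0 : γ 0 ∈ G) (h1 : γ 1 ∈ G) (hσ : 0 < σ) {d : ℝ} (hd : 0 < d) :
    ∃ c : ℝ → X, ContinuousOn c (Icc 0 1) ∧ c 0 = γ 0 ∧ c 1 = γ 1 ∧ MapsTo c (Icc 0 1) G ∧
      eVariationOn c (Icc 0 1) ≤ eVariationOn γ (Icc 0 1) + ENNReal.ofReal σ ∧
      ∀ t ∈ Icc 0 1, dist (c t) (γ t) ≤ d := by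
  obtain ⟨δ, hδ, hunif⟩ := Metric.uniformContinuousOn_iff.1
    (isCompact_Icc.uniformContinuousOn_of_continuous hγ) (d / 4) (by positivity)
  obtain ⟨N, hN⟩ := exists_nat_one_div_lt hδ
  have hN₀ : (0 : ℝ) < N + 1 := by positivity
  set η := min (d / 16) (σ / (3 * (N + 1)))
  have hη : 0 < η := lt_min (by positivity) (by positivity)
  obtain ⟨c, hc, hc0, hc1, hcG, hcvar, hcd⟩ :=
    hG.exists_near_on_Icc_of_le_mul hGd hη hη (h := 1 / (N + 1)) h1 (by simp [hη.le]) N 0 one_pos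
      (by field_simp; norm_num) (fun s hs t ht hst => (hunif s hs t ht (by linarith)).le)
      (γ 0) h0 (by simp [hη.le])
  refine ⟨c, hc, hc0, hc1, hcG, hcvar.trans ?_, fun t ht => (hcd t ht).trans ?_⟩
  · have hcast : ((N : ℝ≥0∞) + 1) = ENNReal.ofReal (N + 1) := by
      rw [ENNReal.ofReal_add N.cast_nonneg zero_le_one, ENNReal.ofReal_natCast, ENNReal.ofReal_one]
    have hησ : η * (3 * (N + 1)) ≤ σ := (le_div_iff₀ (by positivity)).1 (min_le_right _ _)
    rw [hcast, ← ENNReal.ofReal_mul hN₀.le]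
    gcongr
    linarith
  · linarith [min_le_left (d / 16) (σ / (3 * (N + 1)))]

end JoinedByShortCurves

lemma exists_seq_of_forall_exists {α : Type*} {P : ℕ → α → Prop} {R : α → α → Prop} {x₀ : α}
    (h₀ : P 0 x₀) (h : ∀ n x, P n x → ∃ y, P (n + 1) y ∧ R x y) :
    ∃ f : ℕ → α, ∀ n, P n (f n) ∧ R (f n) (f (n + 1)) := by
  choose g hg using h
  let f : ∀ n, {x // P n x} :=
    fun n => Nat.rec ⟨x₀, h₀⟩ (fun n x => ⟨g n x.1 x.2, (hg n x.1 x.2).1⟩) n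
  exact ⟨fun n => (f n).1, fun n => ⟨(f n).2, (hg n _ (f n).2).2⟩⟩

lemma exists_tendstoUniformlyOn_of_dist_succ_le {α X : Type*} [MetricSpace X] [CompleteSpace X]
    {F : ℕ → α → X} {s : Set α} {b : ℕ → ℝ} (hb : ∀ n, b (n + 1) ≤ b n / 2)
    (hF : ∀ n, ∀ t ∈ s, dist (F (n + 1) t) (F n t) ≤ b n) :
    ∃ f : α → X, TendstoUniformlyOn F f atTop s ∧ ∀ n, ∀ t ∈ s, dist (F n t) (f t) ≤ 2 * b n := by
  classical
  have hgeom : ∀ n k, b (n + k) ≤ b n * (1 / 2) ^ k := by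
    intro n k
    induction k with
    | zero => simp
    | succ k ih => rw [← add_assoc, pow_succ]; linarith [hb (n + k)]
  have hstep : ∀ t ∈ s, ∀ n k, dist (F (n + k) t) (F (n + k + 1) t) ≤ b n * (1 / 2) ^ k :=
    fun t ht n k => by rw [dist_comm]; exact (hF (n + k) t ht).trans (hgeom n k)
  have hlim : ∀ t ∈ s, ∃ x, Tendsto (fun n => F n t) atTop (𝓝 x) := fun t ht =>
    cauchySeq_tendsto_of_complete (cauchySeq_of_le_geometric (1 / 2 : ℝ) (b 0) (by norm_num)
      fun k => by simpa only [zero_add] using hstep t ht 0 k)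
  let f : α → X := fun t =>
    if h : ∃ x, Tendsto (fun n => F n t) atTop (𝓝 x) then h.choose else F 0 t
  have hf : ∀ t ∈ s, Tendsto (fun n => F n t) atTop (𝓝 (f t)) := fun t ht => by
    simp only [f, dif_pos (hlim t ht)]
    exact (hlim t ht).choose_spec
  have hbound : ∀ n, ∀ t ∈ s, dist (F n t) (f t) ≤ 2 * b n := by
    intro n t ht
    have := dist_le_of_le_geometric_of_tendsto₀ _ (b n) (by norm_num) (hstep t ht n)
      ((hf t ht).comp ((tendsto_add_atTop_nat n).congr fun k => add_comm k n))
    norm_num at this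
    linarith
  refine ⟨f, Metric.tendstoUniformlyOn_iff.2 fun ε hε => ?_, hbound⟩
  have hsmall : Tendsto (fun n => 2 * (b 0 * (1 / 2) ^ n)) atTop (𝓝 0) := by
    simpa using ((tendsto_pow_atTop_nhds_zero_of_lt_one (r := (1 / 2 : ℝ)) (by norm_num)
      (by norm_num)).const_mul (b 0)).const_mul (2 : ℝ)
  filter_upwards [hsmall.eventually (gt_mem_nhds hε)] with n hn t ht
  have hbn := hgeom 0 n
  rw [zero_add] at hbn
  rw [dist_comm]
  linarith [hbound n t ht]

namespace JoinedByShortCurves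

variable {X : Type*} [MetricSpace X]

/-- The `n`-th curve of the iteration: it runs `4 * b`-deep inside `U 0, …, U (n - 1)` and has
used up `σ - σ / 2 ^ (n + 1)` of the length budget `σ`. -/
structure IsApproximant (U : ℕ → Set X) (p q : X) (σ : ℝ) (n : ℕ) (γ : ℝ → X) (b : ℝ) :
    Prop where
  continuousOn : ContinuousOn γ (Icc 0 1)
  map_zero : γ 0 = p
  map_one : γ 1 = q
  pos : 0 < b
  ball_subset : ∀ t ∈ Icc (0 : ℝ) 1, ∀ j < n, Metric.ball (γ t) (4 * b) ⊆ U j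
  eVariationOn_le : eVariationOn γ (Icc 0 1) ≤ ENNReal.ofReal (dist p q + σ - σ / 2 ^ (n + 1))

variable {U : ℕ → Set X} {p q : X} {σ : ℝ}

lemma IsApproximant.exists_succ (hU : ∀ k, IsOpen (U k)) (hshort : ∀ k, JoinedByShortCurves (U k))
    (hdense : ∀ k, Dense (U k)) (hσ : 0 < σ) {n : ℕ} (hp : p ∈ U n) (hq : q ∈ U n) {γ : ℝ → X}
    {b : ℝ} (h : IsApproximant U p q σ n γ b) :
    ∃ γ' b', IsApproximant U p q σ (n + 1) γ' b' ∧ b' ≤ b / 2 ∧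
      ∀ t ∈ Icc 0 1, dist (γ' t) (γ t) ≤ b := by
  obtain ⟨γ', hγ', h0, h1, hγ'U, hvar, hclose⟩ := (hshort n).exists_near (hdense n)
    h.continuousOn (h.map_zero ▸ hp) (h.map_one ▸ hq) (σ := σ / 2 ^ (n + 2)) (by positivity) h.pos
  have hK : γ' '' Icc 0 1 ⊆ ⋂ j ∈ Finset.range (n + 1), U j := by
    rintro _ ⟨t, ht, rfl⟩
    simp only [mem_iInter₂, Finset.mem_range]
    intro j hj
    rcases Nat.lt_succ_iff_lt_or_eq.1 hj with hj | rfl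
    · exact h.ball_subset t ht j hj (Metric.mem_ball.2 (by linarith [hclose t ht, h.pos]))
    · exact hγ'U ht
  obtain ⟨δ, hδ, hδK⟩ := (isCompact_Icc.image_of_continuousOn hγ').exists_thickening_subset_open
    (isOpen_biInter_finset fun j _ => hU j) hK
  refine ⟨γ', min (δ / 4) (b / 2), ⟨hγ', h0.trans h.map_zero, h1.trans h.map_one,
    lt_min (by positivity) (by linarith [h.pos]), fun t ht j hj => ?_, ?_⟩, min_le_right _ _,
    hclose⟩
  · calc Metric.ball (γ' t) (4 * min (δ / 4) (b / 2))
        ⊆ Metric.ball (γ' t) δ :=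
          Metric.ball_subset_ball (by linarith [min_le_left (δ / 4) (b / 2)])
      _ ⊆ Metric.thickening δ (γ' '' Icc 0 1) :=
          Metric.ball_subset_thickening (mem_image_of_mem γ' ht) δ
      _ ⊆ U j := hδK.trans (biInter_subset_of_mem (Finset.mem_range.2 hj))
  · have hbudget : 0 ≤ dist p q + σ - σ / 2 ^ (n + 1) := by
      have : σ / 2 ^ (n + 1) ≤ σ := div_le_self hσ.le (one_le_pow₀ one_le_two)
      linarith [dist_nonneg (x := p) (y := q)]
    calc eVariationOn γ' (Icc 0 1)
        ≤ ENNReal.ofReal (dist p q + σ - σ / 2 ^ (n + 1)) + ENNReal.ofReal (σ / 2 ^ (n + 2)) :=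
          hvar.trans (add_le_add h.eVariationOn_le le_rfl)
      _ = ENNReal.ofReal (dist p q + σ - σ / 2 ^ (n + 1 + 1)) := by
          rw [← ENNReal.ofReal_add hbudget (by positivity), pow_succ 2 (n + 1)]
          ring_nf

lemma _root_.joinedByShortCurves_iInter [CompleteSpace X] (hU : ∀ k, IsOpen (U k))
    (hshort : ∀ k, JoinedByShortCurves (U k)) (hdense : ∀ k, Dense (U k)) :
    JoinedByShortCurves (⋂ k, U k) := by
  intro p hp q hq σ hσ
  rw [mem_iInter] at hp hq
  obtain ⟨γ₀, hγ₀, h0, h1, -, hvar⟩ := hshort 0 p (hp 0) q (hq 0) (σ / 2) (by positivity)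
  have hstart : IsApproximant U p q σ 0 γ₀ 1 :=
    ⟨hγ₀, h0, h1, one_pos, by simp, by convert hvar using 2; ring⟩
  obtain ⟨s, hs⟩ := exists_seq_of_forall_exists
    (α := (ℝ → X) × ℝ) (x₀ := (γ₀, 1)) (P := fun n x => IsApproximant U p q σ n x.1 x.2)
    (R := fun x y => y.2 ≤ x.2 / 2 ∧ ∀ t ∈ Icc 0 1, dist (y.1 t) (x.1 t) ≤ x.2) hstart
    fun n x hx => by
      obtain ⟨γ', b', h⟩ := hx.exists_succ hU hshort hdense hσ (hp n) (hq n)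
      exact ⟨(γ', b'), h⟩
  obtain ⟨γ, hlim, hdist⟩ := exists_tendstoUniformlyOn_of_dist_succ_le
    (F := fun n => (s n).1) (b := fun n => (s n).2) (fun n => (hs n).2.1) (fun n => (hs n).2.2)
  refine ⟨γ, hlim.continuousOn (Frequently.of_forall fun n => (hs n).1.continuousOn),
    tendsto_nhds_unique (hlim.tendsto_at (left_mem_Icc.2 zero_le_one))
      (tendsto_const_nhds.congr fun n => (hs n).1.map_zero.symm),
    tendsto_nhds_unique (hlim.tendsto_at (right_mem_Icc.2 zero_le_one))
      (tendsto_const_nhds.congr fun n => (hs n).1.map_one.symm), fun t ht => ?_, ?_⟩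
  · -- `γ t` lies within `2 b` of the `(k+1)`-st curve, which runs `4 b`-deep inside `U k`
    refine mem_iInter.2 fun k => (hs (k + 1)).1.ball_subset t ht k k.lt_succ_self ?_
    rw [Metric.mem_ball, dist_comm]
    linarith [hdist (k + 1) t ht, (hs (k + 1)).1.pos]
  · refine eVariationOn_le_of_tendsto (fun t ht => hlim.tendsto_at ht)
      (Eventually.of_forall fun n => (hs n).1.eVariationOn_le.trans ?_)
    exact ENNReal.ofReal_le_ofReal (by linarith [show 0 ≤ σ / 2 ^ (n + 1) by positivity])

end JoinedByShortCurves

section DyadicConcat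

variable {X : Type*} {a : X} {C : ℕ → ℝ → X}

lemma dyadic_anti {m n : ℕ} (h : m ≤ n) : (2⁻¹ : ℝ) ^ n ≤ 2⁻¹ ^ m :=
  pow_le_pow_of_le_one (by norm_num) (by norm_num) h

lemma dyadic_succ_lt (m : ℕ) : (2⁻¹ : ℝ) ^ (m + 1) < 2⁻¹ ^ m :=
  pow_lt_pow_right_of_lt_one₀ (by norm_num) (by norm_num) m.lt_succ_self

lemma exists_dyadic_lt {t : ℝ} (ht : 0 < t) : ∃ m, (2⁻¹ : ℝ) ^ (m + 1) < t := by
  obtain ⟨m, hm⟩ := exists_pow_lt_of_lt_one ht (by norm_num : (2⁻¹ : ℝ) < 1)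
  exact ⟨m, (dyadic_anti m.le_succ).trans_lt hm⟩

open Classical in
/-- The curves `C m` traversed one after the other, `C m` on `[2⁻¹ ^ (m + 1), 2⁻¹ ^ m]`, so that
they accumulate at the parameter `0`, where the value is `a`. -/
noncomputable def dyadicConcat (a : X) (C : ℕ → ℝ → X) (t : ℝ) : X :=
  if h : ∃ m, (2⁻¹ : ℝ) ^ (m + 1) < t then
    C (Nat.find h) (rescale (2⁻¹ ^ (Nat.find h + 1)) (2⁻¹ ^ Nat.find h) t)
  else a

lemma find_dyadic_eq {t : ℝ} {m : ℕ} (h₁ : (2⁻¹ : ℝ) ^ (m + 1) < t) (h₂ : t ≤ 2⁻¹ ^ m)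
    (h : ∃ m, (2⁻¹ : ℝ) ^ (m + 1) < t) [DecidablePred fun m => (2⁻¹ : ℝ) ^ (m + 1) < t] :
    Nat.find h = m :=
  (Nat.find_eq_iff h).2 ⟨h₁, fun _ hn => not_lt.2 (h₂.trans (dyadic_anti hn))⟩

lemma exists_mem_dyadic_Ioc {t : ℝ} (h₀ : 0 < t) (h₁ : t ≤ 1) :
    ∃ m, t ∈ Ioc ((2⁻¹ : ℝ) ^ (m + 1)) (2⁻¹ ^ m) := by
  classical
  have h := exists_dyadic_lt h₀
  refine ⟨Nat.find h, Nat.find_spec h, ?_⟩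
  rcases Nat.eq_zero_or_eq_succ_pred (Nat.find h) with h0 | hk
  · rwa [h0, pow_zero]
  · rw [hk]
    exact not_lt.1 (Nat.find_min h (hk ▸ (Nat.find h).pred_lt_self (by omega)))

lemma dyadicConcat_eqOn (hj : ∀ m, C (m + 1) 1 = C m 0) (m : ℕ) :
    EqOn (dyadicConcat a C) (C m ∘ rescale (2⁻¹ ^ (m + 1)) (2⁻¹ ^ m))
      (Icc (2⁻¹ ^ (m + 1)) (2⁻¹ ^ m)) := by
  classical
  intro t ht
  rcases ht.1.eq_or_lt with rfl | hlt
  · have h : ∃ k, (2⁻¹ : ℝ) ^ (k + 1) < 2⁻¹ ^ (m + 1) := ⟨m + 1, dyadic_succ_lt _⟩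
    rw [dyadicConcat, dif_pos h, find_dyadic_eq (dyadic_succ_lt _) le_rfl h,
      rescale_right (dyadic_succ_lt _), hj, Function.comp_apply, rescale_left]
  · have h : ∃ k, (2⁻¹ : ℝ) ^ (k + 1) < t := ⟨m, hlt⟩
    rw [dyadicConcat, dif_pos h, find_dyadic_eq hlt ht.2 h, Function.comp_apply]

lemma dyadicConcat_zero : dyadicConcat a C 0 = a :=
  dif_neg fun ⟨_, h⟩ => (pow_pos (by norm_num : (0 : ℝ) < 2⁻¹) _).not_gt h

lemma exists_eq_dyadicConcat (hj : ∀ m, C (m + 1) 1 = C m 0) {t : ℝ} (h₀ : 0 < t) (h₁ : t ≤ 1) :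
    ∃ m, t ∈ Ioc ((2⁻¹ : ℝ) ^ (m + 1)) (2⁻¹ ^ m) ∧
      ∃ u ∈ Icc (0 : ℝ) 1, dyadicConcat a C t = C m u := by
  obtain ⟨m, hm⟩ := exists_mem_dyadic_Ioc h₀ h₁
  exact ⟨m, hm, _, mapsTo_rescale_Icc (dyadic_succ_lt m) (Ioc_subset_Icc_self hm),
    dyadicConcat_eqOn hj m (Ioc_subset_Icc_self hm)⟩

lemma continuousOn_dyadicConcat [TopologicalSpace X] (hC : ∀ m, ContinuousOn (C m) (Icc 0 1))
    (hj : ∀ m, C (m + 1) 1 = C m 0) (M : ℕ) :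
    ContinuousOn (dyadicConcat a C) (Icc (2⁻¹ ^ (M + 1)) 1) := by
  induction M with
  | zero =>
    simpa using ((hC 0).comp_rescale (dyadic_succ_lt 0)).congr (dyadicConcat_eqOn hj 0)
  | succ M ih =>
    rw [← Icc_union_Icc_eq_Icc (dyadic_succ_lt _).le (pow_le_one₀ (by norm_num) (by norm_num))]
    exact (((hC _).comp_rescale (dyadic_succ_lt _)).congr
      (dyadicConcat_eqOn hj _)).union_of_isClosed ih isClosed_Icc isClosed_Icc

variable [MetricSpace X]

lemma eVariationOn_dyadicConcat (hj : ∀ m, C (m + 1) 1 = C m 0) (M : ℕ) :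
    eVariationOn (dyadicConcat a C) (Icc (2⁻¹ ^ (M + 1)) 1) =
      ∑ m ∈ Finset.range (M + 1), eVariationOn (C m) (Icc 0 1) := by
  induction M with
  | zero =>
    have h := dyadicConcat_eqOn (a := a) hj 0
    rw [pow_zero] at h
    rw [Finset.sum_range_one, eVariationOn.eq_of_eqOn h,
      eVariationOn_comp_rescale _ (pow_zero (2⁻¹ : ℝ) ▸ dyadic_succ_lt 0)]
  | succ M ih =>
    rw [← eVariationOn_Icc_add_Icc _ (dyadic_succ_lt _).le
        (pow_le_one₀ (by norm_num) (by norm_num)),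
      ih, eVariationOn.eq_of_eqOn (dyadicConcat_eqOn hj _), eVariationOn_comp_rescale _
      (dyadic_succ_lt _), Finset.sum_range_succ _ (M + 1), add_comm]

lemma continuousWithinAt_dyadicConcat_zero (hj : ∀ m, C (m + 1) 1 = C m 0)
    (hlim : TendstoUniformlyOn C (fun _ => a) atTop (Icc 0 1)) :
    ContinuousWithinAt (dyadicConcat a C) (Icc 0 1) 0 := by
  rw [Metric.continuousWithinAt_iff]
  intro ε hε
  obtain ⟨M, hM⟩ := (Metric.tendstoUniformlyOn_iff.1 hlim ε hε).exists_forall_of_atTop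
  refine ⟨2⁻¹ ^ M, by positivity, fun {t} ht htM => ?_⟩
  rw [dyadicConcat_zero]
  rcases ht.1.eq_or_lt with rfl | h₀
  · rwa [dyadicConcat_zero, dist_self]
  obtain ⟨m, hm, u, hu, hγ⟩ := exists_eq_dyadicConcat hj h₀ ht.2
  have hMm : M ≤ m := by
    by_contra! hlt
    rw [Real.dist_eq, sub_zero, abs_of_pos h₀] at htM
    linarith [hm.1, dyadic_anti (n := M) (m := m + 1) hlt]
  rw [hγ, dist_comm]
  exact hM m hMm u hu

end DyadicConcat

lemma exists_curve_of_tendstoUniformlyOn {X : Type*} [MetricSpace X] {C : ℕ → ℝ → X}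
    (hC : ∀ m, ContinuousOn (C m) (Icc 0 1)) (hj : ∀ m, C (m + 1) 1 = C m 0) {a : X}
    (hlim : TendstoUniformlyOn C (fun _ => a) atTop (Icc 0 1)) :
    ∃ γ : ℝ → X, ContinuousOn γ (Icc 0 1) ∧ γ 0 = a ∧ γ 1 = C 0 1 ∧
      MapsTo γ (Icc 0 1) (insert a (⋃ m, C m '' Icc 0 1)) ∧
      eVariationOn γ (Icc 0 1) ≤ ∑' m, eVariationOn (C m) (Icc 0 1) := by
  have hcont0 := continuousWithinAt_dyadicConcat_zero hj hlim
  have hcont : ContinuousOn (dyadicConcat a C) (Icc 0 1) := by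
    intro t ht
    rcases ht.1.eq_or_lt with rfl | h₀
    · exact hcont0
    obtain ⟨M, hM⟩ := exists_dyadic_lt h₀
    refine (continuousOn_dyadicConcat hC hj M t ⟨hM.le, ht.2⟩).mono_of_mem_nhdsWithin ?_
    exact mem_of_superset (inter_mem_nhdsWithin _ (Ioi_mem_nhds hM))
      fun s hs => ⟨le_of_lt hs.2, hs.1.2⟩
  refine ⟨dyadicConcat a C, hcont, dyadicConcat_zero, ?_, fun t ht => ?_, ?_⟩
  · simpa [rescale_right (by norm_num : (2⁻¹ : ℝ) < 1)] using
      dyadicConcat_eqOn (a := a) hj 0 (right_mem_Icc.2 (dyadic_succ_lt 0).le)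
  · rcases ht.1.eq_or_lt with rfl | h₀
    · exact dyadicConcat_zero ▸ mem_insert a _
    obtain ⟨m, -, u, hu, hγ⟩ := exists_eq_dyadicConcat hj h₀ ht.2
    exact .inr (mem_iUnion.2 ⟨m, u, hu, hγ.symm⟩)
  · refine eVariationOn_Icc_le_of_continuousWithinAt
      ((continuousWithinAt_Icc_iff_Ici one_pos).1 hcont0) fun s hs => ?_
    obtain ⟨M, hM⟩ := exists_dyadic_lt hs.1
    calc eVariationOn (dyadicConcat a C) (Icc s 1)
        ≤ eVariationOn (dyadicConcat a C) (Icc (2⁻¹ ^ (M + 1)) 1) :=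
          eVariationOn.mono _ (Icc_subset_Icc_left hM.le)
      _ ≤ ∑' m, eVariationOn (C m) (Icc 0 1) :=
          eVariationOn_dyadicConcat hj M ▸ ENNReal.sum_le_tsum _

namespace JoinedByShortCurves

variable {X : Type*} [MetricSpace X] {G : Set X}

lemma exists_curve_to (hG : JoinedByShortCurves G) (hGd : Dense G) (a : X) {ε : ℝ} (hε : 0 < ε) :
    ∃ γ : ℝ → X, ContinuousOn γ (Icc 0 1) ∧ γ 0 = a ∧ γ 1 ∈ G ∧
      MapsTo γ (Icc 0 1) (insert a G) ∧ eVariationOn γ (Icc 0 1) ≤ ENNReal.ofReal ε := by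
  set r : ℕ → ℝ := fun m => ε / 6 * 2⁻¹ ^ m
  have hr : ∀ m, 0 < r m := fun m => by positivity
  have hr_succ : ∀ m, r (m + 1) ≤ r m := fun m =>
    mul_le_mul_of_nonneg_left (dyadic_anti m.le_succ) (by positivity)
  choose x hxG hxa using fun m => hGd.exists_dist_lt a (hr m)
  have hxx : ∀ m, dist (x (m + 1)) (x m) ≤ 2 * r m := fun m => by
    linarith [dist_triangle (x (m + 1)) a (x m), dist_comm a (x (m + 1)), hxa m, hxa (m + 1),
      hr_succ m]
  choose C hC hC0 hC1 hCG hCvar using fun m => hG (x (m + 1)) (hxG _) (x m) (hxG m) (r m) (hr m)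
  have hCvar' : ∀ m, eVariationOn (C m) (Icc 0 1) ≤ ENNReal.ofReal (3 * r m) := fun m =>
    (hCvar m).trans (ENNReal.ofReal_le_ofReal (by linarith [hxx m]))
  have hlim : TendstoUniformlyOn C (fun _ => a) atTop (Icc 0 1) := by
    rw [Metric.tendstoUniformlyOn_iff]
    intro δ hδ
    have hsmall : Tendsto (fun m => 4 * r m) atTop (𝓝 0) := by
      simpa [r] using ((tendsto_pow_atTop_nhds_zero_of_lt_one (r := (2⁻¹ : ℝ)) (by norm_num)
        (by norm_num)).const_mul (ε / 6)).const_mul (4 : ℝ)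
    filter_upwards [hsmall.eventually (gt_mem_nhds hδ)] with m hm u hu
    have hCu := dist_le_of_eVariationOn_le (by linarith [hr m]) (hCvar' m) hu
      (left_mem_Icc.2 zero_le_one)
    rw [hC0] at hCu
    linarith [dist_triangle a (x (m + 1)) (C m u), dist_comm (x (m + 1)) (C m u), hxa (m + 1),
      hr_succ m]
  obtain ⟨γ, hγ, h0, h1, hγG, hvar⟩ :=
    exists_curve_of_tendstoUniformlyOn hC (fun m => (hC1 (m + 1)).trans (hC0 m).symm) hlim
  refine ⟨γ, hγ, h0, h1 ▸ (hC1 0).symm ▸ hxG 0,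
    hγG.mono_right (insert_subset_insert (iUnion_subset fun m => (hCG m).image_subset)),
    hvar.trans ?_⟩
  calc ∑' m, eVariationOn (C m) (Icc 0 1) ≤ ∑' m, ENNReal.ofReal (3 * r m) :=
        ENNReal.tsum_le_tsum hCvar'
    _ = ENNReal.ofReal ε := by
        have hsum : HasSum (fun m => 3 * r m) ε := by
          have h := (hasSum_geometric_of_lt_one (r := (2⁻¹ : ℝ)) (by norm_num)
            (by norm_num)).mul_left (ε / 2)
          rw [show ε / 2 * (1 - 2⁻¹)⁻¹ = ε by norm_num] at h
          have hfun : (fun m => 3 * r m) = fun m => ε / 2 * 2⁻¹ ^ m := by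
            funext m
            simp only [r]
            ring
          rwa [hfun]
        rw [← ENNReal.ofReal_tsum_of_nonneg (fun m => by linarith [hr m]) hsum.summable,
          hsum.tsum_eq]

end JoinedByShortCurves

lemma JoinedByShortCurves.metricallyRemovable_compl {X : Type*} [MetricSpace X] {G : Set X}
    (hG : JoinedByShortCurves G) (hGd : Dense G) : MetricallyRemovable Gᶜ := by
  intro ε hε a b
  obtain ⟨α, hα, hα0, hα1, hαG, hαvar⟩ := hG.exists_curve_to hGd a (ε := ε / 5) (by positivity)
  obtain ⟨β, hβ, hβ0, hβ1, hβG, hβvar⟩ := hG.exists_curve_to hGd b (ε := ε / 5) (by positivity)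
  obtain ⟨μ, hμ, hμ0, hμ1, hμG, hμvar⟩ := hG (α 1) hα1 (β 1) hβ1 (ε / 5) (by positivity)
  have hβ' : ContinuousOn (fun t => β (1 - t)) (Icc 0 1) :=
    hβ.comp (by fun_prop) fun t ht => ⟨by linarith [ht.2], by linarith [ht.1]⟩
  obtain ⟨κ, hκ, hκ0, hκ1, hκimg, hκvar⟩ := exists_concat hα hμ hμ0.symm
  obtain ⟨γ, hγ, hγ0, hγ1, hγimg, hγvar⟩ :=
    exists_concat hκ hβ' (by rw [hκ1, hμ1, sub_zero])
  refine ⟨γ, hγ, hγ0.trans (hκ0.trans hα0), hγ1.trans (by rw [sub_self, hβ0]), ?_, ?_⟩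
  · have himg : γ '' Icc 0 1 ⊆ insert a (insert b G) := by
      refine hγimg.trans (union_subset (hκimg.trans (union_subset ?_ ?_)) ?_)
      · exact hαG.image_subset.trans (insert_subset_insert (subset_insert b G))
      · exact hμG.image_subset.trans ((subset_insert b G).trans (subset_insert a _))
      · rintro _ ⟨t, ht, rfl⟩
        exact subset_insert a _ (hβG ⟨by linarith [ht.2], by linarith [ht.1]⟩)
    intro t ht hmem
    rcases himg (mem_image_of_mem γ ht) with h | h | h
    · exact hmem.2 (.inl h)
    · exact hmem.2 (.inr h)
    · exact hmem.1 h
  · have hdist : dist (α 1) (β 1) ≤ ε / 5 + dist a b + ε / 5 := by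
      have hαa := dist_le_of_eVariationOn_le (by positivity) hαvar (right_mem_Icc.2 zero_le_one)
        (left_mem_Icc.2 zero_le_one)
      have hβb := dist_le_of_eVariationOn_le (by positivity) hβvar (right_mem_Icc.2 zero_le_one)
        (left_mem_Icc.2 zero_le_one)
      rw [hα0] at hαa
      rw [hβ0] at hβb
      linarith [dist_triangle4 (α 1) a b (β 1), dist_comm (β 1) b]
    rw [hγvar, hκvar, eVariationOn_comp_one_sub]
    calc eVariationOn α (Icc 0 1) + eVariationOn μ (Icc 0 1) + eVariationOn β (Icc 0 1)
        ≤ ENNReal.ofReal (ε / 5) + ENNReal.ofReal (dist (α 1) (β 1) + ε / 5) +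
          ENNReal.ofReal (ε / 5) := by gcongr
      _ = ENNReal.ofReal (ε / 5 + (dist (α 1) (β 1) + ε / 5) + ε / 5) := by
          rw [← ENNReal.ofReal_add (by positivity) (by positivity),
            ← ENNReal.ofReal_add (by positivity) (by positivity)]
      _ ≤ ENNReal.ofReal (dist a b + ε) := ENNReal.ofReal_le_ofReal (by linarith)

/-- A countable union of closed metrically removable sets in `ℝⁿ` is metrically removable. -/
theorem metricallyRemovable_iUnion {n : ℕ} (E : ℕ → Set (EuclideanSpace ℝ (Fin n)))
    (hclosed : ∀ k, IsClosed (E k)) (hrem : ∀ k, MetricallyRemovable (E k)) :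
    MetricallyRemovable (⋃ k, E k) := by
  rcases subsingleton_or_nontrivial (EuclideanSpace ℝ (Fin n)) with _ | _
  · exact .of_subsingleton _
  have hopen : ∀ k, IsOpen (E k)ᶜ := fun k => (hclosed k).isOpen_compl
  have hdense : ∀ k, Dense (E k)ᶜ := fun k => (hrem k).dense_compl_s8
  have hG : JoinedByShortCurves (⋂ k, (E k)ᶜ) :=
    joinedByShortCurves_iInter hopen (fun k => (hrem k).joinedByShortCurves_compl) hdense
  simpa only [compl_iInter, compl_compl] using
    hG.metricallyRemovable_compl (dense_iInter_of_isOpen hopen hdense)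
end

section
/- Suppose E ⊆ ℝⁿ is intervally thin. Let P and Q be distinct (n−1)-dimensional affine hyperplanes in ℝⁿ, let p ∈ P, q ∈ Q, and r > 0. Then there exist points a ∈ P ∩ B(p,r) and b ∈ Q ∩ B(q,r) such that the line segment [a,b] is disjoint from E. -/
/-!
Move `p` and `q` slightly inside `P` and `Q` to points `p'`, `q'` such that the line through them
is transverse to both hyperplanes, and extend `[p', q']` beyond both ends to a segment `[a₀, b₀]`.
Interval thinness gives `E`-free segments `[a', b']` with endpoints arbitrarily close to `a₀, b₀`.
By transversality, the points where `[a', b']` crosses `P` and `Q` depend continuously on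
`(a', b')`, so they lie near `p'` and `q'`, and the piece of `[a', b']` between them is the
required segment.
-/

open Set Metric

/-- A set `E ⊆ ℝⁿ` is *intervally thin* if for all `a, b ∈ ℝⁿ` and `ε > 0` there exist `a', b'`
with `|a - a'| < ε`, `|b - b'| < ε` such that the segment `[a', b']` is disjoint from `E`. -/
def IntervallyThin {n : ℕ} (E : Set (EuclideanSpace ℝ (Fin n))) : Prop :=
  ∀ a b : EuclideanSpace ℝ (Fin n), ∀ ε > 0, ∃ a' b' : EuclideanSpace ℝ (Fin n),
    dist a a' < ε ∧ dist b b' < ε ∧ ∀ x ∈ segment ℝ a' b', x ∉ E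

open Filter Topology AffineMap Module

theorem Submodule.exists_ker_eq_of_finrank_sub_one_le {K V : Type*} [Field K] [AddCommGroup V]
    [Module K V] [FiniteDimensional K V] {D : Submodule K V} (hD : D ≠ ⊤)
    (hrank : finrank K V - 1 ≤ finrank K D) : ∃ f : V →ₗ[K] K, LinearMap.ker f = D := by
  obtain ⟨f, hf0, hle⟩ := D.exists_le_ker_of_lt_top hD.lt_top
  have hker : finrank K (LinearMap.ker f) < finrank K V :=
    Submodule.finrank_lt (mt LinearMap.ker_eq_top.mp hf0)
  exact ⟨f, (Submodule.eq_of_le_of_finrank_le hle (by omega)).symm⟩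

theorem Submodule.exists_norm_lt_add_notMem {V : Type*} [NormedAddCommGroup V]
    [NormedSpace ℝ V] {S D : Submodule ℝ V} {u : V} (h : ¬(u ∈ S ∧ D ≤ S)) {δ : ℝ}
    (hδ : 0 < δ) : ∃ w ∈ D, ‖w‖ < δ ∧ u + w ∉ S := by
  by_cases hu : u ∈ S
  · obtain ⟨w, hwD, hwS⟩ := SetLike.not_le_iff_exists.mp fun hle => h ⟨hu, hle⟩
    have hw : 0 < ‖w‖ := norm_pos_iff.mpr fun hw0 => hwS (hw0 ▸ S.zero_mem)
    have hc : 0 < δ / (2 * ‖w‖) := by positivity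
    refine ⟨(δ / (2 * ‖w‖)) • w, D.smul_mem _ hwD, ?_, ?_⟩
    · rw [norm_smul, Real.norm_of_nonneg hc.le, div_mul_eq_mul_div, mul_div_mul_right _ _ hw.ne']
      linarith
    · rwa [S.add_mem_iff_right hu, S.smul_mem_iff hc.ne']
  · exact ⟨0, D.zero_mem, by simpa using hδ, by simpa using hu⟩

theorem ContinuousLinearMap.eventually_exists_mem_segment_eq_near {V : Type*}
    [NormedAddCommGroup V] [NormedSpace ℝ V] (f : V →L[ℝ] ℝ) {a b : V} (hab : f a ≠ f b)
    {t : ℝ} (ht : t ∈ Ioo 0 1) {δ : ℝ} (hδ : 0 < δ) :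
    ∀ᶠ y : V × V in 𝓝 (a, b), ∃ x ∈ segment ℝ y.1 y.2,
      f x = f (lineMap a b t) ∧ dist x (lineMap a b t) < δ := by
  set c := f (lineMap a b t)
  set s : V × V → ℝ := fun y => (c - f y.1) / (f y.2 - f y.1)
  have hs_cont : ContinuousAt s (a, b) :=
    (by fun_prop : ContinuousAt (fun y : V × V => c - f y.1) (a, b)).div (by fun_prop)
      (sub_ne_zero.mpr hab.symm)
  have hs : s (a, b) = t := by
    simp only [s, c, lineMap_apply_module', map_add, map_smul, map_sub, smul_eq_mul]
    field_simp [sub_ne_zero.mpr hab.symm]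
    ring
  have hx_cont : ContinuousAt (fun y : V × V => lineMap y.1 y.2 (s y)) (a, b) := by
    simp only [lineMap_apply_module']
    fun_prop
  have hne : ∀ᶠ y : V × V in 𝓝 (a, b), f y.2 - f y.1 ≠ 0 :=
    (by fun_prop : ContinuousAt (fun y : V × V => f y.2 - f y.1) (a, b)).eventually_ne
      (sub_ne_zero.mpr hab.symm)
  filter_upwards [hs_cont.eventually (isOpen_Ioo.mem_nhds (hs ▸ ht)),
    hx_cont.eventually (ball_mem_nhds _ hδ), hne] with y hsy hxy hy
  refine ⟨lineMap y.1 y.2 (s y), ?_, ?_, by simpa [hs] using hxy⟩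
  · rw [segment_eq_image_lineMap]
    exact ⟨s y, Ioo_subset_Icc_self hsy, rfl⟩
  · simp only [s, lineMap_apply_module', map_add, map_smul, map_sub, smul_eq_mul]
    field_simp
    ring

namespace AffineSubspace

variable {V : Type*} [NormedAddCommGroup V] [NormedSpace ℝ V] [FiniteDimensional ℝ V]

theorem eventually_exists_mem_segment_mem_near {P : AffineSubspace ℝ V}
    (hP : finrank ℝ V - 1 ≤ finrank ℝ P.direction) {a b : V} (hab : b - a ∉ P.direction)
    {t : ℝ} (ht : t ∈ Ioo 0 1) (htP : lineMap a b t ∈ P) {δ : ℝ} (hδ : 0 < δ) :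
    ∀ᶠ y : V × V in 𝓝 (a, b), ∃ x ∈ segment ℝ y.1 y.2,
      x ∈ P ∧ dist x (lineMap a b t) < δ := by
  have htop : P.direction ≠ ⊤ := fun h => hab (h ▸ Submodule.mem_top)
  obtain ⟨f, hf⟩ := Submodule.exists_ker_eq_of_finrank_sub_one_le htop hP
  have hfab : LinearMap.toContinuousLinearMap f a ≠ LinearMap.toContinuousLinearMap f b := by
    rwa [ne_comm, ← sub_ne_zero, LinearMap.coe_toContinuousLinearMap', ← map_sub, ne_eq,
      ← LinearMap.mem_ker, hf]
  filter_upwards [(LinearMap.toContinuousLinearMap f).eventually_exists_mem_segment_eq_near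
    hfab ht hδ] with y ⟨x, hx, hfx, hdist⟩
  refine ⟨x, hx, ?_, hdist⟩
  rw [← vsub_right_mem_direction_iff_mem htP, ← hf, LinearMap.mem_ker, vsub_eq_sub, map_sub]
  simpa [sub_eq_zero] using hfx

theorem exists_norm_lt_add_sub_notMem_direction {P Q : AffineSubspace ℝ V} (hPQ : P ≠ Q)
    (hdim : finrank ℝ P.direction = finrank ℝ Q.direction) {p q : V} (hp : p ∈ P)
    (hq : q ∈ Q) {δ : ℝ} (hδ : 0 < δ) : ∃ w ∈ Q.direction, ‖w‖ < δ ∧ q + w - p ∉ P.direction := by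
  have hnot_both : ¬(q - p ∈ P.direction ∧ Q.direction ≤ P.direction) := by
    rintro ⟨hqp, hle⟩
    have hqP : q ∈ P := (vsub_right_mem_direction_iff_mem hp q).mp hqp
    exact hPQ (ext_of_direction_eq (Submodule.eq_of_le_of_finrank_eq hle hdim.symm).symm
      ⟨q, hqP, hq⟩)
  obtain ⟨w, hwQ, hw, hwP⟩ := Submodule.exists_norm_lt_add_notMem hnot_both hδ
  exact ⟨w, hwQ, hw, by rwa [add_sub_right_comm]⟩

theorem exists_near_sub_notMem_directions {P Q : AffineSubspace ℝ V} (hPQ : P ≠ Q)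
    (hdim : finrank ℝ P.direction = finrank ℝ Q.direction) {p q : V} (hp : p ∈ P)
    (hq : q ∈ Q) {δ : ℝ} (hδ : 0 < δ) :
    ∃ p' ∈ P, ∃ q' ∈ Q, dist p' p < δ ∧ dist q' q < δ ∧
      q' - p' ∉ P.direction ∧ q' - p' ∉ Q.direction := by
  obtain ⟨w, hwQ, hw, hwP⟩ := exists_norm_lt_add_sub_notMem_direction hPQ hdim hp hq hδ
  obtain ⟨v, hvP, hv, hvQ⟩ :=
    exists_norm_lt_add_sub_notMem_direction hPQ.symm hdim.symm hq hp hδ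
  refine ⟨v +ᵥ p, vadd_mem_of_mem_direction hvP hp, w +ᵥ q, vadd_mem_of_mem_direction hwQ hq,
    by simpa using hv, by simpa using hw, ?_, ?_⟩
  · have h : (w +ᵥ q) - (v +ᵥ p) = q + w - p - v := by simp only [vadd_eq_add]; abel
    rwa [h, P.direction.sub_mem_iff_left hvP]
  · have h : (w +ᵥ q) - (v +ᵥ p) = -(p + v - q - w) := by simp only [vadd_eq_add]; abel
    rwa [h, Q.direction.neg_mem_iff, Q.direction.sub_mem_iff_left hwQ]

end AffineSubspace

theorem IntervallyThin.frequently_segment_notMem {n : ℕ} {E : Set (EuclideanSpace ℝ (Fin n))}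
    (hE : IntervallyThin E) (a b : EuclideanSpace ℝ (Fin n)) :
    ∃ᶠ y : EuclideanSpace ℝ (Fin n) × EuclideanSpace ℝ (Fin n) in 𝓝 (a, b),
      ∀ x ∈ segment ℝ y.1 y.2, x ∉ E := by
  rw [Filter.frequently_iff]
  intro U hU
  obtain ⟨ε, hε, hball⟩ := Metric.mem_nhds_iff.mp hU
  obtain ⟨a', b', ha, hb, hseg⟩ := hE a b ε hε
  exact ⟨(a', b'), hball (by simp [Prod.dist_eq, dist_comm, ha, hb]), hseg⟩

/-- If `E ⊆ ℝⁿ` is intervally thin and `P, Q` are distinct `(n-1)`-dimensional affine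
hyperplanes, then for any `p ∈ P`, `q ∈ Q`, `r > 0` the sets `P ∩ B(p,r)` and `Q ∩ B(q,r)`
can be connected by a line segment disjoint from `E`. -/
theorem intervallyThin_connect_hyperplanes {n : ℕ} (E : Set (EuclideanSpace ℝ (Fin n)))
    (hE : IntervallyThin E) (P Q : AffineSubspace ℝ (EuclideanSpace ℝ (Fin n)))
    (hPdim : Module.finrank ℝ P.direction = n - 1)
    (hQdim : Module.finrank ℝ Q.direction = n - 1)
    (hPQ : P ≠ Q) (p : EuclideanSpace ℝ (Fin n)) (hp : p ∈ P)
    (q : EuclideanSpace ℝ (Fin n)) (hq : q ∈ Q) (r : ℝ) (hr : 0 < r) :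
    ∃ a ∈ (P : Set (EuclideanSpace ℝ (Fin n))) ∩ ball p r,
      ∃ b ∈ (Q : Set (EuclideanSpace ℝ (Fin n))) ∩ ball q r,
        ∀ x ∈ segment ℝ a b, x ∉ E := by
  obtain ⟨p', hp'P, q', hq'Q, hpp', hqq', hP, hQ⟩ :=
    P.exists_near_sub_notMem_directions hPQ (hPdim.trans hQdim.symm) hp hq (half_pos hr)
  set a₀ := lineMap p' q' (-1 : ℝ)
  set b₀ := lineMap p' q' (2 : ℝ)
  have hdir : b₀ - a₀ = (3 : ℝ) • (q' - p') := by
    simp only [a₀, b₀, lineMap_apply_module']; module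
  have hp' : lineMap a₀ b₀ (1 / 3 : ℝ) = p' := by
    simp only [a₀, b₀, lineMap_apply_module']; module
  have hq' : lineMap a₀ b₀ (2 / 3 : ℝ) = q' := by
    simp only [a₀, b₀, lineMap_apply_module']; module
  have hcrossP := P.eventually_exists_mem_segment_mem_near (t := 1 / 3)
    (by rw [finrank_euclideanSpace_fin, hPdim])
    (by rwa [hdir, P.direction.smul_mem_iff three_ne_zero]) (by norm_num) (hp' ▸ hp'P) (half_pos hr)
  have hcrossQ := Q.eventually_exists_mem_segment_mem_near (t := 2 / 3)
    (by rw [finrank_euclideanSpace_fin, hQdim])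
    (by rwa [hdir, Q.direction.smul_mem_iff three_ne_zero]) (by norm_num) (hq' ▸ hq'Q) (half_pos hr)
  obtain ⟨⟨a', b'⟩, hseg, ⟨a, ha, haP, hap⟩, ⟨b, hb, hbQ, hbq⟩⟩ :=
    ((hE.frequently_segment_notMem a₀ b₀).and_eventually (hcrossP.and hcrossQ)).exists
  rw [hp'] at hap
  rw [hq'] at hbq
  refine ⟨a, ⟨haP, ?_⟩, b, ⟨hbQ, ?_⟩,
    fun x hx => hseg x ((convex_segment a' b').segment_subset ha hb hx)⟩
  · exact mem_ball.mpr ((dist_triangle a p' p).trans_lt (by linarith))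
  · exact mem_ball.mpr ((dist_triangle b q' q).trans_lt (by linarith))
end

section
/- For any distinct points a, b ∈ ℝⁿ and any ε > 0 there exist a doubly infinite sequence of points {x_k : k ∈ ℤ} on the segment [a,b] and positive radii r_k > 0 such that: (a) x_k → a as k → −∞ and x_k → b as k → +∞; and (b) for any choice of points y_k ∈ B(x_k, r_k) (k ∈ ℤ), the angle between the vectors y_k − y_{k−1} and b − a is less than ε for every k ∈ ℤ. -/
open Set Metric Filter Topology InnerProductGeometry

/-- For distinct `a, b ∈ ℝⁿ` and `ε > 0` there are points `x k ∈ [a,b]` (`k ∈ ℤ`) and radii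
`r k > 0` such that `x k → a` as `k → -∞`, `x k → b` as `k → +∞`, and for any choice of points
`y k ∈ B(x k, r k)`, the angle between `y k - y (k-1)` and `b - a` is less than `ε`. -/
theorem exists_doubly_infinite_ball_chain {n : ℕ} (a b : EuclideanSpace ℝ (Fin n))
    (hab : a ≠ b) (ε : ℝ) (hε : 0 < ε) :
    ∃ (x : ℤ → EuclideanSpace ℝ (Fin n)) (r : ℤ → ℝ),
      (∀ k, x k ∈ segment ℝ a b) ∧ (∀ k, 0 < r k) ∧
      Tendsto x atBot (𝓝 a) ∧ Tendsto x atTop (𝓝 b) ∧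
      ∀ y : ℤ → EuclideanSpace ℝ (Fin n), (∀ k, y k ∈ ball (x k) (r k)) →
        ∀ k : ℤ, angle (y k - y (k - 1)) (b - a) < ε := by
  have hba : b - a ≠ 0 := sub_ne_zero.mpr hab.symm
  set t : ℤ → ℝ := fun k => (1 + (2:ℝ) ^ (-k))⁻¹ with ht
  have hpos : ∀ k : ℤ, (0:ℝ) < (2:ℝ) ^ (-k) := fun k => by positivity
  have hden : ∀ k : ℤ, (1:ℝ) < 1 + (2:ℝ) ^ (-k) := fun k => by linarith [hpos k]
  have ht0 : ∀ k, 0 < t k := fun k => by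
    have := hden k; simp only [ht]; positivity
  have ht1 : ∀ k, t k < 1 := fun k => by
    have h := hden k
    simpa only [ht] using inv_lt_one_of_one_lt₀ h
  have htmono : StrictMono t := by
    intro k l hkl
    have h2 : (2:ℝ) ^ (-l) < (2:ℝ) ^ (-k) :=
      zpow_lt_zpow_right₀ one_lt_two (by omega)
    have h1 : (0:ℝ) < 1 + (2:ℝ) ^ (-l) := by linarith [hpos l]
    simp only [ht]
    exact inv_strictAnti₀ h1 (by linarith)
  set x : ℤ → EuclideanSpace ℝ (Fin n) := fun k => a + t k • (b - a) with hx
  -- limits of t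
  have H2 : Tendsto (fun k : ℤ => (2:ℝ) ^ k) atTop atTop := by
    apply tendsto_atTop_atTop_of_monotone
    · intro i j hij
      exact zpow_le_zpow_right₀ one_le_two hij
    · intro c
      obtain ⟨m, hm⟩ := pow_unbounded_of_one_lt c (one_lt_two (α := ℝ))
      exact ⟨(m : ℤ), by rw [zpow_natCast]; exact hm.le⟩
  have Hneg : Tendsto (fun k : ℤ => (2:ℝ) ^ (-k)) atTop (𝓝 0) := by
    have := H2.inv_tendsto_atTop
    refine this.congr fun k => ?_
    simp [zpow_neg]
  have Hbot : Tendsto (fun k : ℤ => (2:ℝ) ^ (-k)) atBot atTop :=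
    H2.comp tendsto_neg_atBot_atTop
  have htTop : Tendsto t atTop (𝓝 1) := by
    have : Tendsto (fun k : ℤ => (1 + (2:ℝ) ^ (-k))⁻¹) atTop (𝓝 ((1 + 0)⁻¹)) :=
      ((tendsto_const_nhds.add Hneg).inv₀ (by norm_num))
    simpa only [add_zero, inv_one] using this
  have htBot : Tendsto t atBot (𝓝 0) := by
    have h1 : Tendsto (fun k : ℤ => 1 + (2:ℝ) ^ (-k)) atBot atTop :=
      tendsto_atTop_add_const_left _ 1 Hbot
    exact h1.inv_tendsto_atTop
  -- key continuity step
  have key : ∀ k : ℤ, ∃ δ > 0, ∀ p q : EuclideanSpace ℝ (Fin n),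
      dist p (x k) < δ → dist q (x (k - 1)) < δ → angle (p - q) (b - a) < ε := by
    intro k
    have hv : x k - x (k - 1) = (t k - t (k - 1)) • (b - a) := by
      simp only [hx]
      rw [add_sub_add_left_eq_sub, ← sub_smul]
    have hdpos : 0 < t k - t (k - 1) := sub_pos.mpr (htmono (by omega))
    have hvne : x k - x (k - 1) ≠ 0 := by
      rw [hv]
      exact smul_ne_zero hdpos.ne' hba
    have hc : ContinuousAt
        (fun p : EuclideanSpace ℝ (Fin n) × EuclideanSpace ℝ (Fin n) =>
          angle (p.1 - p.2) (b - a)) (x k, x (k - 1)) := by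
      have h1 : ContinuousAt (fun q : EuclideanSpace ℝ (Fin n) × EuclideanSpace ℝ (Fin n) =>
          angle q.1 q.2) (x k - x (k - 1), b - a) := continuousAt_angle hvne hba
      have h2 : ContinuousAt (fun p : EuclideanSpace ℝ (Fin n) × EuclideanSpace ℝ (Fin n) =>
          (p.1 - p.2, b - a)) (x k, x (k - 1)) :=
        ((continuous_fst.sub continuous_snd).prodMk continuous_const).continuousAt
      exact ContinuousAt.comp (f := fun p : EuclideanSpace ℝ (Fin n) × EuclideanSpace ℝ (Fin n) => (p.1 - p.2, b - a)) h1 h2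
    have hval : angle (x k - x (k - 1)) (b - a) = 0 := by
      rw [hv, angle_smul_left_of_pos _ _ hdpos, angle_self hba]
    have hev : ∀ᶠ p in 𝓝 (x k, x (k - 1)),
        angle (p.1 - p.2) (b - a) < ε := by
      have h0 : angle (x k - x (k - 1)) (b - a) < ε := by rw [hval]; exact hε
      exact hc.eventually_lt_const (u := ε) h0
    rw [Metric.eventually_nhds_iff] at hev
    obtain ⟨δ, hδ, hδ'⟩ := hev
    refine ⟨δ, hδ, fun p q hp hq => ?_⟩
    exact hδ' (y := (p, q)) (by
      rw [Prod.dist_eq]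
      exact max_lt hp hq)
  choose δ hδpos hδ using key
  refine ⟨x, fun k => min (δ k) (δ (k + 1)), ?_, ?_, ?_, ?_, ?_⟩
  · intro k
    rw [segment_eq_image']
    exact ⟨t k, ⟨(ht0 k).le, (ht1 k).le⟩, rfl⟩
  · exact fun k => lt_min (hδpos k) (hδpos (k + 1))
  · have : Tendsto x atBot (𝓝 (a + (0:ℝ) • (b - a))) :=
      tendsto_const_nhds.add (htBot.smul_const (b - a))
    simpa using this
  · have : Tendsto x atTop (𝓝 (a + (1:ℝ) • (b - a))) :=
      tendsto_const_nhds.add (htTop.smul_const (b - a))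
    simpa using this
  · intro y hy k
    have h1 : dist (y k) (x k) < δ k :=
      lt_of_lt_of_le (mem_ball.mp (hy k)) (min_le_left _ _)
    have h2 : dist (y (k - 1)) (x (k - 1)) < δ k := by
      have := lt_of_lt_of_le (mem_ball.mp (hy (k - 1))) (min_le_right _ _)
      simpa using this
    exact hδ k (y k) (y (k - 1)) h1 h2
end

section
/- For any set E ⊆ ℝⁿ, the set of vertices of E is countable, where a point p is a vertex of E if p ∈ E and there exist a nonzero vector v ∈ ℝⁿ and an angle θ ∈ (0, π/2) such that E ⊆ C(p, v, θ). -/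
/-!
A cone of opening angle `θ < π/2` and axis `v` is `a ‖x - p‖ ≤ ⟪x - p, v⟫` with
`a = cos θ ‖v‖ > 0`. If `E` lies in such a cone, the axis `v` can be replaced by a point `d` of a
fixed countable dense set and `a` by a smaller rational `c > 0`. Two points of `E` sharing the
same pair `(c, d)` coincide, because each lies in the other's cone and the two cones point in
opposite directions. Hence the vertices are covered by countably many subsingletons.
-/

open Set Real
open scoped RealInnerProductSpace

section

variable {F : Type*} [NormedAddCommGroup F] [InnerProductSpace ℝ F]

theorem sub_mul_norm_le_inner_of_norm_sub_le {a b : ℝ} {y v d : F}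
    (hy : a * ‖y‖ ≤ ⟪y, v⟫) (hvd : ‖v - d‖ ≤ b) : (a - b) * ‖y‖ ≤ ⟪y, d⟫ := by
  have hdiff : ⟪y, v⟫ - ⟪y, d⟫ ≤ b * ‖y‖ :=
    calc ⟪y, v⟫ - ⟪y, d⟫ = ⟪y, v - d⟫ := (inner_sub_right y v d).symm
      _ ≤ ‖y‖ * ‖v - d‖ := real_inner_le_norm y (v - d)
      _ ≤ b * ‖y‖ := by rw [mul_comm]; exact mul_le_mul_of_nonneg_right hvd (norm_nonneg y)
  linarith

theorem subsingleton_setOf_mul_norm_sub_le_inner (s : Set F) {c : ℝ} (hc : 0 < c) (d : F) :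
    {p | p ∈ s ∧ ∀ x ∈ s, c * ‖x - p‖ ≤ ⟪x - p, d⟫}.Subsingleton := by
  rintro p ⟨hp, hps⟩ q ⟨hq, hqs⟩
  have hpq : c * ‖q - p‖ ≤ ⟪q - p, d⟫ := hps q hq
  have hqp : c * ‖q - p‖ ≤ -⟪q - p, d⟫ := by
    simpa only [norm_sub_rev, ← inner_neg_left, neg_sub] using hqs p hp
  have : ‖q - p‖ = 0 := le_antisymm (by nlinarith [norm_nonneg (q - p)]) (norm_nonneg _)
  exact (sub_eq_zero.mp (norm_eq_zero.mp this)).symm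

theorem exists_rat_pos_mem_mul_norm_sub_le_inner {D : Set F} (hD : Dense D) {s : Set F} {p v : F}
    {a : ℝ} (ha : 0 < a) (hcone : ∀ x ∈ s, a * ‖x - p‖ ≤ ⟪x - p, v⟫) :
    ∃ c : ℚ, 0 < c ∧ ∃ d ∈ D, ∀ x ∈ s, (c : ℝ) * ‖x - p‖ ≤ ⟪x - p, d⟫ := by
  obtain ⟨c, hc0, hca⟩ := exists_rat_btwn (half_pos ha)
  obtain ⟨d, hdD, hvd⟩ := hD.exists_mem_open Metric.isOpen_ball
    ⟨v, Metric.mem_ball_self (half_pos ha)⟩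
  refine ⟨c, by exact_mod_cast hc0, d, hdD, fun x hx => ?_⟩
  have hvd' : ‖v - d‖ ≤ a / 2 := by rw [norm_sub_rev, ← dist_eq_norm]; exact hvd.le
  have key := sub_mul_norm_le_inner_of_norm_sub_le (hcone x hx) hvd'
  have : (c : ℝ) * ‖x - p‖ ≤ (a - a / 2) * ‖x - p‖ :=
    mul_le_mul_of_nonneg_right (by linarith) (norm_nonneg _)
  exact this.trans key

theorem countable_setOf_mul_norm_sub_le_inner [TopologicalSpace.SeparableSpace F] (s : Set F) :
    {p | p ∈ s ∧ ∃ a > 0, ∃ v : F, ∀ x ∈ s, a * ‖x - p‖ ≤ ⟪x - p, v⟫}.Countable := by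
  obtain ⟨D, hDc, hD⟩ := TopologicalSpace.exists_countable_dense F
  refine Countable.mono ?_ <| (Set.to_countable (Ioi (0 : ℚ))).biUnion fun c hc =>
    hDc.biUnion fun d _ => (subsingleton_setOf_mul_norm_sub_le_inner s
      (Rat.cast_pos.mpr hc) d).countable
  rintro p ⟨hp, a, ha, v, hcone⟩
  obtain ⟨c, hc, d, hdD, hd⟩ := exists_rat_pos_mem_mul_norm_sub_le_inner hD ha hcone
  exact mem_biUnion hc (mem_biUnion hdD ⟨hp, hd⟩)

end

/-- For any set `E ⊆ ℝⁿ`, the set of vertices of `E` is countable, where `p` is a vertex of `E`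
if `p ∈ E` and `E` is contained in a closed cone with vertex `p`, axis `v ≠ 0`, and opening
angle `θ ∈ (0, π/2)`. -/
theorem countable_vertices {n : ℕ} (E : Set (EuclideanSpace ℝ (Fin n))) :
    {p : EuclideanSpace ℝ (Fin n) | p ∈ E ∧
      ∃ v : EuclideanSpace ℝ (Fin n), v ≠ 0 ∧ ∃ θ ∈ Ioo (0 : ℝ) (π / 2),
        ∀ x ∈ E, Real.cos θ * (‖x - p‖ * ‖v‖) ≤ ⟪x - p, v⟫}.Countable := by
  refine (countable_setOf_mul_norm_sub_le_inner E).mono ?_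
  rintro p ⟨hp, v, hv, θ, hθ, hcone⟩
  have hcos : 0 < Real.cos θ := cos_pos_of_mem_Ioo ⟨by linarith [hθ.1, pi_pos], hθ.2⟩
  refine ⟨hp, Real.cos θ * ‖v‖, mul_pos hcos (norm_pos_iff.mpr hv), v, fun x hx => ?_⟩
  simpa only [mul_comm ‖x - p‖, mul_assoc] using hcone x hx
end
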